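/- arXiv:1307.0622 — 10 statements merged into one kernel-verified Lean document; each statement's English description precedes it below -/
import Mathlib

section
/- For every y in the closed unit disk of ℝ² and every z in the open unit disk with z ≠ 0, one has |y − z| ≤ 3 |y − z*|, where z* = z/|z|². -/
/-!
With `r = ‖z‖`, the point `z* = z / r²` has norm `1 / r`, so every `y` in the closed unit ball
satisfies `‖y - z*‖ ≥ 1 / r - 1`, while `‖z* - z‖ = 1 / r - r = (1 + r) (1 / r - 1) ≤ 2 (1 / r - 1)`.
The triangle inequality through `z*` then gives `‖y - z‖ ≤ 3 ‖y - z*‖`.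
-/

/-- The inverse point of `z` with respect to the unit circle: `z* = z / |z|²`. -/
noncomputable def starInv (z : ℂ) : ℂ := (‖z‖ ^ 2)⁻¹ • z

section NormedSpace

variable {E : Type*} [NormedAddCommGroup E] [NormedSpace ℝ E]

theorem norm_inv_norm_sq_smul (z : E) : ‖(‖z‖ ^ 2)⁻¹ • z‖ = ‖z‖⁻¹ := by
  rcases eq_or_ne ‖z‖ 0 with hz | hz
  · simp [hz]
  · rw [norm_smul, norm_inv, norm_pow, norm_norm]
    field_simp

theorem norm_inv_norm_sq_smul_sub_self {z : E} (hz : ‖z‖ ≤ 1) :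
    ‖(‖z‖ ^ 2)⁻¹ • z - z‖ = ‖z‖⁻¹ - ‖z‖ := by
  rcases eq_or_ne ‖z‖ 0 with hz0 | hz0
  · simp [hz0]
  have hcoef : 0 ≤ (‖z‖ ^ 2)⁻¹ - 1 :=
    sub_nonneg.2 ((one_le_inv₀ (by positivity)).2 (pow_le_one₀ (norm_nonneg z) hz))
  rw [show (‖z‖ ^ 2)⁻¹ • z - z = ((‖z‖ ^ 2)⁻¹ - 1) • z by rw [sub_smul, one_smul], norm_smul,
    Real.norm_of_nonneg hcoef]
  field_simp

theorem inv_norm_sub_one_le_norm_sub_inv_norm_sq_smul {y : E} (hy : ‖y‖ ≤ 1) (z : E) :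
    ‖z‖⁻¹ - 1 ≤ ‖y - (‖z‖ ^ 2)⁻¹ • z‖ :=
  calc ‖z‖⁻¹ - 1 ≤ ‖(‖z‖ ^ 2)⁻¹ • z‖ - ‖y‖ := by rw [norm_inv_norm_sq_smul]; linarith
    _ ≤ ‖y - (‖z‖ ^ 2)⁻¹ • z‖ := by rw [norm_sub_rev]; exact norm_sub_norm_le _ _

theorem norm_sub_le_three_mul_norm_sub_inv_norm_sq_smul {y z : E} (hy : ‖y‖ ≤ 1)
    (hz : ‖z‖ ≤ 1) (hz0 : z ≠ 0) : ‖y - z‖ ≤ 3 * ‖y - (‖z‖ ^ 2)⁻¹ • z‖ := by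
  set w := (‖z‖ ^ 2)⁻¹ • z
  have hr : ‖z‖ ≠ 0 := norm_ne_zero_iff.2 hz0
  have hgap : 0 ≤ ‖z‖⁻¹ - 1 := sub_nonneg.2 ((one_le_inv₀ (norm_pos_iff.2 hz0)).2 hz)
  have hfactor : ‖z‖⁻¹ - ‖z‖ = (1 + ‖z‖) * (‖z‖⁻¹ - 1) := by field_simp; ring
  calc ‖y - z‖ ≤ ‖y - w‖ + ‖w - z‖ := norm_sub_le_norm_sub_add_norm_sub _ _ _
    _ = ‖y - w‖ + (1 + ‖z‖) * (‖z‖⁻¹ - 1) := by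
      rw [norm_inv_norm_sq_smul_sub_self hz, hfactor]
    _ ≤ ‖y - w‖ + 2 * ‖y - w‖ := by
      gcongr
      · linarith
      · exact inv_norm_sub_one_le_norm_sub_inv_norm_sq_smul hy z
    _ = 3 * ‖y - w‖ := by ring

end NormedSpace

/-- For every `y` in the closed unit disk and every `z ≠ 0` in the open unit disk,
`|y − z| ≤ 3 |y − z*|`. -/
theorem dist_le_three_mul_dist_starInv
    (y : ℂ) (hy : y ∈ Metric.closedBall (0 : ℂ) 1)
    (z : ℂ) (hz : z ∈ Metric.ball (0 : ℂ) 1) (hz0 : z ≠ 0) :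
    ‖y - z‖ ≤ 3 * ‖y - starInv z‖ :=
  norm_sub_le_three_mul_norm_sub_inv_norm_sq_smul (mem_closedBall_zero_iff.1 hy)
    (mem_ball_zero_iff.1 hz).le hz0
end

section
/- There exists a constant C > 0 such that |K_D(y₁,z) − K_D(y₂,z)| ≤ C |y₁ − y₂| / (|y₁ − z| |y₂ − z|) for all y₁, y₂ in the open unit disk D and all z ∈ D with z ≠ y₁ and z ≠ y₂. -/
/-- Rotation by `π/2`: for `a = (a₁, a₂)`, `a^⊥ = (−a₂, a₁)`. -/
noncomputable def perp (a : ℂ) : ℂ := Complex.I * a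

/-- The Biot–Savart kernel of the unit disk:
`K_D(y,z) = (1/(2π)) ((y−z)/|y−z|² − (y−z*)/|y−z*|²)^⊥` for `z ≠ 0`,
with the convention `K_D(y,0) = (1/(2π)) y^⊥/|y|²`. -/
noncomputable def KD (y z : ℂ) : ℂ :=
  if z = 0 then (2 * Real.pi)⁻¹ • perp ((‖y‖ ^ 2)⁻¹ • y)
  else (2 * Real.pi)⁻¹ •
    perp ((‖y - z‖ ^ 2)⁻¹ • (y - z) - (‖y - starInv z‖ ^ 2)⁻¹ • (y - starInv z))

/-! Write `ι a = a / |a|²` for the inversion in the unit circle, so that, up to the rotation and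
the factor `1/(2π)`, `K_D(y, z) = ι (y - z) - ι (y - z*)`, and `|ι a - ι b| = |a - b| / (|a| |b|)`.
For `y, z` in the closed unit disk,
`|z|² |y - z*|² = |y - z|² + (1 - |y|²)(1 - |z|²) ≥ |y - z|²`, so the image term is dominated by
the singular one and `C = 1/π` works. -/

open EuclideanGeometry Real

section UnitInversion

variable {V : Type*} [NormedAddCommGroup V] [InnerProductSpace ℝ V]

theorem inversion_zero_one_apply (a : V) : inversion (0 : V) 1 a = (‖a‖ ^ 2)⁻¹ • a := by
  simp [inversion]

theorem norm_inversion_zero_one_sub {a b : V} (ha : a ≠ 0) (hb : b ≠ 0) :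
    ‖inversion (0 : V) 1 a - inversion 0 1 b‖ = ‖a - b‖ / (‖a‖ * ‖b‖) := by
  have h := dist_inversion_inversion ha hb 1
  rw [dist_eq_norm, dist_eq_norm, dist_eq_norm, dist_eq_norm, sub_zero, sub_zero] at h
  rw [h, one_pow, one_div_mul_eq_div]

theorem norm_sq_mul_norm_sub_inversion_sq (y : V) {z : V} (hz : z ≠ 0) :
    ‖z‖ ^ 2 * ‖y - inversion (0 : V) 1 z‖ ^ 2 = ‖y - z‖ ^ 2 + (1 - ‖y‖ ^ 2) * (1 - ‖z‖ ^ 2) := by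
  have hz2 : ‖z‖ ^ 2 ≠ 0 := by positivity
  rw [inversion_zero_one_apply, norm_sub_sq_real, norm_sub_sq_real, inner_smul_right, norm_smul,
    Real.norm_of_nonneg (by positivity)]
  field_simp
  ring

theorem norm_sub_le_norm_sub_inversion_zero_one {y z : V} (hy : ‖y‖ ≤ 1) (hz : ‖z‖ ≤ 1) :
    ‖y - z‖ ≤ ‖y - inversion (0 : V) 1 z‖ := by
  rcases eq_or_ne z 0 with rfl | hz₀
  · simp
  refine (pow_le_pow_iff_left₀ (norm_nonneg _) (norm_nonneg _) two_ne_zero).mp ?_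
  have key := norm_sq_mul_norm_sub_inversion_sq y hz₀
  have hyz : 0 ≤ (1 - ‖y‖ ^ 2) * (1 - ‖z‖ ^ 2) := by
    apply mul_nonneg <;> nlinarith [norm_nonneg y, norm_nonneg z]
  have hz2 : ‖z‖ ^ 2 ≤ 1 := by nlinarith [norm_nonneg z]
  nlinarith [sq_nonneg ‖y - inversion (0 : V) 1 z‖]

end UnitInversion

theorem starInv_eq_inversion (z : ℂ) : starInv z = inversion 0 1 z :=
  (inversion_zero_one_apply z).symm

theorem norm_perp (a : ℂ) : ‖perp a‖ = ‖a‖ := by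
  simp [perp]

theorem KD_zero_right (y : ℂ) : KD y 0 = (2 * π)⁻¹ • perp (inversion 0 1 y) := by
  rw [KD, if_pos rfl, inversion_zero_one_apply]

theorem KD_of_ne_zero {z : ℂ} (hz : z ≠ 0) (y : ℂ) :
    KD y z = (2 * π)⁻¹ • perp (inversion 0 1 (y - z) - inversion 0 1 (y - inversion 0 1 z)) := by
  rw [KD, if_neg hz, ← inversion_zero_one_apply, ← inversion_zero_one_apply, starInv_eq_inversion]

theorem norm_KD_sub_KD_zero_right {y₁ y₂ : ℂ} (h₁ : y₁ ≠ 0) (h₂ : y₂ ≠ 0) :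
    ‖KD y₁ 0 - KD y₂ 0‖ = (2 * π)⁻¹ * (‖y₁ - y₂‖ / (‖y₁‖ * ‖y₂‖)) := by
  rw [KD_zero_right, KD_zero_right, ← smul_sub, perp, perp, ← mul_sub, norm_smul, ← perp,
    norm_perp, norm_inversion_zero_one_sub h₁ h₂, Real.norm_of_nonneg (by positivity)]

theorem norm_KD_sub_KD_le_of_ne_zero {y₁ y₂ z : ℂ} (hy₁ : ‖y₁‖ ≤ 1) (hy₂ : ‖y₂‖ ≤ 1)
    (hz : ‖z‖ ≤ 1) (hz₀ : z ≠ 0) (h₁ : y₁ ≠ z) (h₂ : y₂ ≠ z) :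
    ‖KD y₁ z - KD y₂ z‖ ≤ π⁻¹ * (‖y₁ - y₂‖ / (‖y₁ - z‖ * ‖y₂ - z‖)) := by
  set w := inversion (0 : ℂ) 1 z
  have hw₁ : ‖y₁ - z‖ ≤ ‖y₁ - w‖ := norm_sub_le_norm_sub_inversion_zero_one hy₁ hz
  have hw₂ : ‖y₂ - z‖ ≤ ‖y₂ - w‖ := norm_sub_le_norm_sub_inversion_zero_one hy₂ hz
  have hz₁ : 0 < ‖y₁ - z‖ := norm_pos_iff.mpr (sub_ne_zero.mpr h₁)
  have hz₂ : 0 < ‖y₂ - z‖ := norm_pos_iff.mpr (sub_ne_zero.mpr h₂)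
  have hdiff : ∀ c : ℂ, y₁ - c ≠ 0 → y₂ - c ≠ 0 →
      ‖inversion 0 1 (y₁ - c) - inversion 0 1 (y₂ - c)‖ = ‖y₁ - y₂‖ / (‖y₁ - c‖ * ‖y₂ - c‖) := by
    intro c hc₁ hc₂
    rw [norm_inversion_zero_one_sub hc₁ hc₂, sub_sub_sub_cancel_right]
  calc ‖KD y₁ z - KD y₂ z‖
      = (2 * π)⁻¹ * ‖(inversion 0 1 (y₁ - z) - inversion 0 1 (y₂ - z))
          - (inversion 0 1 (y₁ - w) - inversion 0 1 (y₂ - w))‖ := by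
        rw [KD_of_ne_zero hz₀, KD_of_ne_zero hz₀, ← smul_sub, perp, perp, ← mul_sub, norm_smul,
          ← perp, norm_perp, Real.norm_of_nonneg (by positivity)]
        congr 2
        abel
    _ ≤ (2 * π)⁻¹ * (‖y₁ - y₂‖ / (‖y₁ - z‖ * ‖y₂ - z‖) + ‖y₁ - y₂‖ / (‖y₁ - w‖ * ‖y₂ - w‖)) := by
        gcongr
        refine (norm_sub_le _ _).trans_eq ?_
        rw [hdiff z (norm_pos_iff.mp hz₁) (norm_pos_iff.mp hz₂),
          hdiff w (norm_pos_iff.mp (hz₁.trans_le hw₁)) (norm_pos_iff.mp (hz₂.trans_le hw₂))]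
    _ ≤ (2 * π)⁻¹ * (‖y₁ - y₂‖ / (‖y₁ - z‖ * ‖y₂ - z‖) + ‖y₁ - y₂‖ / (‖y₁ - z‖ * ‖y₂ - z‖)) := by
        gcongr
    _ = π⁻¹ * (‖y₁ - y₂‖ / (‖y₁ - z‖ * ‖y₂ - z‖)) := by
        ring

/-- There is `C > 0` with
`|K_D(y₁,z) − K_D(y₂,z)| ≤ C |y₁ − y₂| / (|y₁ − z| |y₂ − z|)`
for all `y₁, y₂` in the open unit disk and all `z` in the open unit disk
with `z ≠ y₁` and `z ≠ y₂`. -/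
theorem KD_sub_norm_le :
    ∃ C : ℝ, 0 < C ∧ ∀ y₁ ∈ Metric.ball (0 : ℂ) 1, ∀ y₂ ∈ Metric.ball (0 : ℂ) 1,
      ∀ z ∈ Metric.ball (0 : ℂ) 1, z ≠ y₁ → z ≠ y₂ →
        ‖KD y₁ z - KD y₂ z‖ ≤ C * ‖y₁ - y₂‖ / (‖y₁ - z‖ * ‖y₂ - z‖) := by
  refine ⟨π⁻¹, by positivity, fun y₁ hy₁ y₂ hy₂ z hz h₁ h₂ => ?_⟩
  rw [mem_ball_zero_iff] at hy₁ hy₂ hz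
  rw [mul_div_assoc]
  rcases eq_or_ne z 0 with rfl | hz₀
  · rw [sub_zero, sub_zero, norm_KD_sub_KD_zero_right h₁.symm h₂.symm]
    gcongr
    linarith [pi_pos]
  · exact norm_KD_sub_KD_le_of_ne_zero hy₁.le hy₂.le hz.le hz₀ h₁.symm h₂.symm
end

section
/- There exists a constant C > 0 such that for all y₁, y₂ in the open unit disk D, ∫_D |K_D(y₁,z) − K_D(y₂,z)| dz ≤ C h(|y₁ − y₂|), where the integral is with respect to two-dimensional Lebesgue measure. -/
open MeasureTheory

/-- `h(r) = r (1 + |log r|)`, with `h(0) = 0`. -/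
noncomputable def h (r : ℝ) : ℝ := r * (1 + |Real.log r|)

/-!
The inversion identity `‖a/‖a‖² - b/‖b‖²‖ = ‖a - b‖/(‖a‖‖b‖)`, together with `‖y - z*‖ ≥ ‖y - z‖`
for `y`, `z` in the closed disk, bounds `‖K_D(y₁,z) - K_D(y₂,z)‖` by `r/(π u v)`, where
`r = ‖y₁ - y₂‖`, `u = ‖z - y₁‖`, `v = ‖z - y₂‖`. Since `1/(uv) = (1/u + 1/v)/(u + v)` and
`u + v ≥ max u r`, this is at most a sum of two translates of the radial function
`1/(t · max t r)`, cut off at `t = 2`, whose integral in polar coordinates is `2π(1 + log(2/r))`.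
-/

open Set Real

theorem norm_inv_normSq_smul_sub {E : Type*} [NormedAddCommGroup E] [InnerProductSpace ℝ E]
    {a b : E} (ha : a ≠ 0) (hb : b ≠ 0) :
    ‖(‖a‖ ^ 2)⁻¹ • a - (‖b‖ ^ 2)⁻¹ • b‖ = ‖a - b‖ / (‖a‖ * ‖b‖) := by
  have := EuclideanGeometry.dist_inversion_inversion ha hb 1
  simp only [EuclideanGeometry.inversion, dist_eq_norm, vsub_eq_sub, vadd_eq_add, add_zero,
    sub_zero, one_pow] at this
  simpa [div_eq_inv_mul, inv_pow] using this

theorem norm_sub_le_norm_sub_starInv {y z : ℂ} (hy : ‖y‖ ≤ 1) (hz : ‖z‖ ≤ 1) (hz0 : z ≠ 0) :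
    ‖y - z‖ ≤ ‖y - starInv z‖ := by
  have hdefect : ‖z‖ ^ 2 * ‖y - starInv z‖ ^ 2 - ‖y - z‖ ^ 2 = (1 - ‖y‖ ^ 2) * (1 - ‖z‖ ^ 2) := by
    have : ‖z‖ ^ 2 ≠ 0 := by positivity
    simp only [starInv, @norm_sub_sq_real, norm_smul, inner_smul_right, norm_inv, norm_pow,
      norm_norm]
    field_simp
    ring
  have hy2 : ‖y‖ ^ 2 ≤ 1 := pow_le_one₀ (norm_nonneg y) hy
  have hz2 : ‖z‖ ^ 2 ≤ 1 := pow_le_one₀ (norm_nonneg z) hz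
  have : ‖z‖ ^ 2 * ‖y - starInv z‖ ^ 2 ≤ ‖y - starInv z‖ ^ 2 :=
    mul_le_of_le_one_left (by positivity) hz2
  refine (pow_le_pow_iff_left₀ (norm_nonneg _) (norm_nonneg _) two_ne_zero).mp ?_
  nlinarith [mul_nonneg (sub_nonneg.2 hy2) (sub_nonneg.2 hz2)]

theorem norm_KD_sub_KD_le {y₁ y₂ z : ℂ} (hy₁ : ‖y₁‖ ≤ 1) (hy₂ : ‖y₂‖ ≤ 1) (hz : ‖z‖ ≤ 1)
    (hz0 : z ≠ 0) (hzy₁ : y₁ ≠ z) (hzy₂ : y₂ ≠ z) :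
    ‖KD y₁ z - KD y₂ z‖ ≤ π⁻¹ * (‖y₁ - y₂‖ / (‖y₁ - z‖ * ‖y₂ - z‖)) := by
  set k : ℂ → ℂ := fun a => (‖a‖ ^ 2)⁻¹ • a
  have hu₁ : 0 < ‖y₁ - z‖ := norm_pos_iff.2 (sub_ne_zero.2 hzy₁)
  have hu₂ : 0 < ‖y₂ - z‖ := norm_pos_iff.2 (sub_ne_zero.2 hzy₂)
  have hv₁ := norm_sub_le_norm_sub_starInv hy₁ hz hz0
  have hv₂ := norm_sub_le_norm_sub_starInv hy₂ hz hz0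
  have hdirect : ‖k (y₁ - z) - k (y₂ - z)‖ = ‖y₁ - y₂‖ / (‖y₁ - z‖ * ‖y₂ - z‖) := by
    rw [norm_inv_normSq_smul_sub (norm_pos_iff.1 hu₁) (norm_pos_iff.1 hu₂),
      sub_sub_sub_cancel_right]
  have himage : ‖k (y₁ - starInv z) - k (y₂ - starInv z)‖
      ≤ ‖y₁ - y₂‖ / (‖y₁ - z‖ * ‖y₂ - z‖) := by
    rw [norm_inv_normSq_smul_sub (norm_pos_iff.1 (hu₁.trans_le hv₁))
      (norm_pos_iff.1 (hu₂.trans_le hv₂)), sub_sub_sub_cancel_right]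
    gcongr
  have hKD : KD y₁ z - KD y₂ z = (2 * π)⁻¹ •
      perp ((k (y₁ - z) - k (y₂ - z)) - (k (y₁ - starInv z) - k (y₂ - starInv z))) := by
    simp only [KD, if_neg hz0, perp, ← smul_sub, ← mul_sub, k]
    ring_nf
  calc ‖KD y₁ z - KD y₂ z‖
      ≤ (2 * π)⁻¹ *
          (‖k (y₁ - z) - k (y₂ - z)‖ + ‖k (y₁ - starInv z) - k (y₂ - starInv z)‖) := by
        rw [hKD, norm_smul, perp, norm_mul, Complex.norm_I, one_mul, norm_inv,
          Real.norm_of_nonneg (by positivity)]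
        gcongr
        exact norm_sub_le _ _
    _ ≤ (2 * π)⁻¹ * (‖y₁ - y₂‖ / (‖y₁ - z‖ * ‖y₂ - z‖) + ‖y₁ - y₂‖ / (‖y₁ - z‖ * ‖y₂ - z‖)) := by
        rw [hdirect]
        gcongr
    _ = π⁻¹ * (‖y₁ - y₂‖ / (‖y₁ - z‖ * ‖y₂ - z‖)) := by ring

theorem inv_mul_le_inv_mul_max_add {u v r : ℝ} (hu : 0 < u) (hv : 0 < v) (huv : r ≤ u + v) :
    (u * v)⁻¹ ≤ (u * max u r)⁻¹ + (v * max v r)⁻¹ := by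
  have split : (u * v)⁻¹ = (u * (u + v))⁻¹ + (v * (u + v))⁻¹ := by
    field_simp
    ring
  have hu' : 0 < max u r := hu.trans_le (le_max_left u r)
  have hv' : 0 < max v r := hv.trans_le (le_max_left v r)
  rw [split]
  gcongr <;> exact max_le (by linarith) huv

noncomputable def radialMajorant (r R : ℝ) (w : ℂ) : ℝ :=
  (Iic R).indicator (fun t => (t * max t r)⁻¹) ‖w‖

theorem radialMajorant_nonneg (r R : ℝ) (w : ℂ) : 0 ≤ radialMajorant r R w :=
  indicator_apply_nonneg fun _ =>
    inv_nonneg.2 (mul_nonneg (norm_nonneg w) ((norm_nonneg w).trans (le_max_left _ r)))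

theorem norm_KD_sub_KD_le_radialMajorant {y₁ y₂ z : ℂ} (hy₁ : ‖y₁‖ ≤ 1) (hy₂ : ‖y₂‖ ≤ 1)
    (hz : ‖z‖ ≤ 1) (hz0 : z ≠ 0) (hzy₁ : y₁ ≠ z) (hzy₂ : y₂ ≠ z) :
    ‖KD y₁ z - KD y₂ z‖ ≤ π⁻¹ * ‖y₁ - y₂‖ *
      (radialMajorant ‖y₁ - y₂‖ 2 (z - y₁) + radialMajorant ‖y₁ - y₂‖ 2 (z - y₂)) := by
  have hnear (y : ℂ) (hy : ‖y‖ ≤ 1) : ‖z - y‖ ∈ Iic 2 :=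
    (norm_sub_le z y).trans (by linarith)
  have htri : ‖y₁ - y₂‖ ≤ ‖y₁ - z‖ + ‖y₂ - z‖ := by
    simpa only [dist_eq_norm] using dist_triangle_right y₁ y₂ z
  refine (norm_KD_sub_KD_le hy₁ hy₂ hz hz0 hzy₁ hzy₂).trans ?_
  rw [mul_assoc, div_eq_mul_inv, radialMajorant, radialMajorant, indicator_of_mem (hnear y₁ hy₁),
    indicator_of_mem (hnear y₂ hy₂), norm_sub_rev z, norm_sub_rev z]
  gcongr
  exact inv_mul_le_inv_mul_max_add (norm_pos_iff.2 (sub_ne_zero.2 hzy₁))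
    (norm_pos_iff.2 (sub_ne_zero.2 hzy₂)) htri

theorem continuous_inv_max {r : ℝ} (hr : 0 < r) : Continuous fun t : ℝ => (max t r)⁻¹ :=
  (continuous_id.max continuous_const).inv₀ fun t => (hr.trans_le (le_max_right t r)).ne'

theorem integral_inv_max {r R : ℝ} (hr : 0 < r) (hrR : r ≤ R) :
    ∫ t in (0 : ℝ)..R, (max t r)⁻¹ = 1 + log (R / r) := by
  have hcont := continuous_inv_max hr
  have hlow : ∫ t in (0 : ℝ)..r, (max t r)⁻¹ = ∫ _ in (0 : ℝ)..r, r⁻¹ :=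
    intervalIntegral.integral_congr fun t ht => by
      rw [uIcc_of_le hr.le] at ht
      rw [max_eq_right ht.2]
  have hhigh : ∫ t in r..R, (max t r)⁻¹ = ∫ t in r..R, t⁻¹ :=
    intervalIntegral.integral_congr fun t ht => by
      rw [uIcc_of_le hrR] at ht
      rw [max_eq_left ht.1]
  rw [← intervalIntegral.integral_add_adjacent_intervals (b := r)
    (hcont.intervalIntegrable _ _) (hcont.intervalIntegrable _ _), hlow, hhigh,
    intervalIntegral.integral_const, integral_inv_of_pos hr (hr.trans_le hrR), sub_zero,
    smul_eq_mul, mul_inv_cancel₀ hr.ne']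

theorem eqOn_pow_smul_radialMajorant (r R : ℝ) :
    EqOn
      (fun t : ℝ => t ^ (Module.finrank ℝ ℂ - 1) • (Iic R).indicator (fun t => (t * max t r)⁻¹) t)
      ((Iic R).indicator fun t => (max t r)⁻¹) (Ioi 0) := by
  intro t (ht : 0 < t)
  by_cases htR : t ∈ Iic R
  · simp only [indicator_of_mem htR, Complex.finrank_real_complex, Nat.add_one_sub_one, pow_one,
      smul_eq_mul]
    field_simp
  · simp [htR]

theorem integrable_radialMajorant {r : ℝ} (hr : 0 < r) (R : ℝ) :
    Integrable (radialMajorant r R) := by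
  unfold radialMajorant
  rw [integrable_fun_norm_addHaar,
    integrableOn_congr_fun (eqOn_pow_smul_radialMajorant r R) measurableSet_Ioi,
    IntegrableOn, integrable_indicator_iff measurableSet_Iic, IntegrableOn,
    Measure.restrict_restrict measurableSet_Iic, Iic_inter_Ioi]
  exact (continuous_inv_max hr).integrableOn_Icc.mono_set Ioc_subset_Icc_self

theorem integral_radialMajorant {r R : ℝ} (hr : 0 < r) (hrR : r ≤ R) :
    ∫ w, radialMajorant r R w = 2 * π * (1 + log (R / r)) := by
  unfold radialMajorant
  rw [integral_fun_norm_addHaar,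
    setIntegral_congr_fun measurableSet_Ioi (eqOn_pow_smul_radialMajorant r R),
    integral_indicator measurableSet_Iic,
    Measure.restrict_restrict measurableSet_Iic, Iic_inter_Ioi,
    ← intervalIntegral.integral_of_le (hr.le.trans hrR), integral_inv_max hr hrR]
  simp only [Measure.real, Complex.volume_ball, ENNReal.ofReal_one, one_pow,
    one_mul, ENNReal.coe_toReal, NNReal.coe_real_pi, smul_eq_mul, nsmul_eq_mul,
    Complex.finrank_real_complex, Nat.cast_ofNat]
  ring

theorem integral_norm_KD_sub_KD_le {y₁ y₂ : ℂ} (hy₁ : ‖y₁‖ < 1) (hy₂ : ‖y₂‖ < 1)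
    (hne : y₁ ≠ y₂) :
    ∫ z in Metric.ball (0 : ℂ) 1, ‖KD y₁ z - KD y₂ z‖
      ≤ 4 * ‖y₁ - y₂‖ * (1 + log (2 / ‖y₁ - y₂‖)) := by
  set r := ‖y₁ - y₂‖
  have hr : 0 < r := norm_pos_iff.2 (sub_ne_zero.2 hne)
  have hr2 : r ≤ 2 := (norm_sub_le y₁ y₂).trans (by linarith)
  set M : ℂ → ℝ := fun z =>
    π⁻¹ * r * (radialMajorant r 2 (z - y₁) + radialMajorant r 2 (z - y₂))
  have hM : Integrable M :=
    (((integrable_radialMajorant hr 2).comp_sub_right y₁).add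
      ((integrable_radialMajorant hr 2).comp_sub_right y₂)).const_mul _
  have hM_nonneg : 0 ≤ M := fun z => by
    have := radialMajorant_nonneg r 2 (z - y₁)
    have := radialMajorant_nonneg r 2 (z - y₂)
    positivity
  have hbound : ∀ᵐ z ∂volume.restrict (Metric.ball (0 : ℂ) 1), ‖KD y₁ z - KD y₂ z‖ ≤ M z := by
    have hfin : ({0, y₁, y₂} : Set ℂ).Countable := (toFinite _).countable
    filter_upwards [ae_restrict_mem measurableSet_ball,
      ae_restrict_of_ae (hfin.ae_notMem volume)] with z hz hz'
    simp only [mem_insert_iff, mem_singleton_iff, not_or] at hz'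
    rw [mem_ball_zero_iff] at hz
    exact norm_KD_sub_KD_le_radialMajorant hy₁.le hy₂.le hz.le hz'.1 (Ne.symm hz'.2.1)
      (Ne.symm hz'.2.2)
  calc ∫ z in Metric.ball (0 : ℂ) 1, ‖KD y₁ z - KD y₂ z‖
      ≤ ∫ z in Metric.ball (0 : ℂ) 1, M z :=
        integral_mono_of_nonneg (.of_forall fun _ => norm_nonneg _) hM.integrableOn hbound
    _ ≤ ∫ z, M z := setIntegral_le_integral hM (.of_forall hM_nonneg)
    _ = π⁻¹ * r * (2 * (2 * π * (1 + log (2 / r)))) := by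
        rw [integral_const_mul, integral_add ((integrable_radialMajorant hr 2).comp_sub_right y₁)
          ((integrable_radialMajorant hr 2).comp_sub_right y₂), integral_sub_right_eq_self,
          integral_sub_right_eq_self, integral_radialMajorant hr hr2]
        ring
    _ = 4 * r * (1 + log (2 / r)) := by
        field_simp
        ring

theorem mul_one_add_log_two_div_le_two_mul_h {r : ℝ} (hr : 0 < r) :
    r * (1 + log (2 / r)) ≤ 2 * h r := by
  have hlog2 : log 2 ≤ 1 := by linarith [log_le_sub_one_of_pos (zero_lt_two' ℝ)]
  rw [h, log_div two_ne_zero hr.ne']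
  nlinarith [neg_le_abs (log r), abs_nonneg (log r)]

/-- There is `C > 0` with `∫_D |K_D(y₁,z) − K_D(y₂,z)| dz ≤ C h(|y₁ − y₂|)`
for all `y₁, y₂` in the open unit disk. -/
theorem integral_KD_sub_le :
    ∃ C : ℝ, 0 < C ∧ ∀ y₁ ∈ Metric.ball (0 : ℂ) 1, ∀ y₂ ∈ Metric.ball (0 : ℂ) 1,
      ∫ z in Metric.ball (0 : ℂ) 1, ‖KD y₁ z - KD y₂ z‖ ≤ C * h ‖y₁ - y₂‖ := by
  refine ⟨8, by norm_num, fun y₁ hy₁ y₂ hy₂ => ?_⟩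
  rw [mem_ball_zero_iff] at hy₁ hy₂
  rcases eq_or_ne y₁ y₂ with rfl | hne
  · simp [h]
  calc ∫ z in Metric.ball (0 : ℂ) 1, ‖KD y₁ z - KD y₂ z‖
      ≤ 4 * (‖y₁ - y₂‖ * (1 + log (2 / ‖y₁ - y₂‖))) := by
        rw [← mul_assoc]
        exact integral_norm_KD_sub_KD_le hy₁ hy₂ hne
    _ ≤ 8 * h ‖y₁ - y₂‖ := by
        linarith [mul_one_add_log_two_div_le_two_mul_h (norm_pos_iff.2 (sub_ne_zero.2 hne))]
end

section
/- For all y, z ∈ ℝ² with z ≠ 0, z ≠ y and z ≠ y*, one has 2π (K_D(y,z) · y) = (z^⊥ · y) (|y|² − 1)(1/|z|² − 1) / (|y − z|² |y − z*|²). -/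
/-! Pairing with `y` annihilates the `y`-components of both terms of the kernel, so each term
contributes a multiple of `⟨z^⊥, y⟩`, the second one scaled by `|z|⁻²`. The common coefficient
`|y - z|² / |z|² - |y - z*|²` factors as `(|y|² - 1)(1/|z|² - 1)` by expanding both squares. -/

theorem norm_sub_sq_mul_inv_sub_norm_sub_inv_smul_sq {E : Type*} [NormedAddCommGroup E]
    [InnerProductSpace ℝ E] (y : E) {z : E} (hz : z ≠ 0) :
    ‖y - z‖ ^ 2 * (‖z‖ ^ 2)⁻¹ - ‖y - (‖z‖ ^ 2)⁻¹ • z‖ ^ 2 =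
      (‖y‖ ^ 2 - 1) * ((‖z‖ ^ 2)⁻¹ - 1) := by
  have hz' : ‖z‖ ≠ 0 := norm_ne_zero_iff.2 hz
  rw [norm_sub_sq_real, norm_sub_sq_real, real_inner_smul_right, norm_smul, Real.norm_eq_abs,
    abs_of_pos (by positivity)]
  field_simp
  ring

theorem starInv_starInv (z : ℂ) : starInv (starInv z) = z := by
  rcases eq_or_ne z 0 with rfl | hz
  · simp [starInv]
  have hz' : ‖z‖ ≠ 0 := norm_ne_zero_iff.2 hz
  simp only [starInv, norm_smul, Real.norm_eq_abs, smul_smul,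
    abs_of_pos (by positivity : (0 : ℝ) < (‖z‖ ^ 2)⁻¹)]
  field_simp
  simp

theorem perp_sub (a b : ℂ) : perp (a - b) = perp a - perp b := mul_sub _ _ _

theorem perp_smul (c : ℝ) (a : ℂ) : perp (c • a) = c • perp a := mul_smul_comm _ _ _

theorem inner_perp_self (a : ℂ) : inner ℝ (perp a) a = 0 := by
  rw [perp, Complex.inner, map_mul, Complex.conj_I, mul_left_comm, Complex.mul_conj]
  simp

theorem inner_perp_sub_self (y a : ℂ) : inner ℝ (perp (y - a)) y = -inner ℝ (perp a) y := by
  rw [perp_sub, inner_sub_left, inner_perp_self, zero_sub]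

theorem inner_perp_starInv (z y : ℂ) :
    inner ℝ (perp (starInv z)) y = (‖z‖ ^ 2)⁻¹ * inner ℝ (perp z) y := by
  rw [starInv, perp_smul, real_inner_smul_left]

/-- For `z ≠ 0`, `z ≠ y`, `z ≠ y*`:
`2π (K_D(y,z)·y) = (z^⊥·y)(|y|²−1)(1/|z|²−1)/(|y−z|²|y−z*|²)`. -/
theorem two_pi_KD_inner (y z : ℂ) (hz0 : z ≠ 0) (hzy : z ≠ y) (hzy' : z ≠ starInv y) :
    2 * Real.pi * (inner ℝ (KD y z) y : ℝ) =
      (inner ℝ (perp z) y : ℝ) * (‖y‖ ^ 2 - 1) * ((‖z‖ ^ 2)⁻¹ - 1) /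
        (‖y - z‖ ^ 2 * ‖y - starInv z‖ ^ 2) := by
  have hyz : ‖y - z‖ ≠ 0 := norm_ne_zero_iff.2 (sub_ne_zero.2 hzy.symm)
  have hyz' : ‖y - starInv z‖ ≠ 0 := by
    refine norm_ne_zero_iff.2 (sub_ne_zero.2 fun h => hzy' ?_)
    rw [h, starInv_starInv]
  have hz : ‖z‖ ≠ 0 := norm_ne_zero_iff.2 hz0
  have key := norm_sub_sq_mul_inv_sub_norm_sub_inv_smul_sq y hz0
  rw [← starInv] at key
  rw [KD, if_neg hz0, real_inner_smul_left, perp_sub, inner_sub_left, perp_smul, perp_smul,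
    real_inner_smul_left, real_inner_smul_left, inner_perp_sub_self, inner_perp_sub_self,
    inner_perp_starInv, mul_assoc _ (‖y‖ ^ 2 - 1), ← key]
  field_simp
  ring
end

section
/- Let C > 0, T > 0 and let f : [0,T] → [0,1] be a differentiable function with f(0) = 0 and f'(t) ≤ C h(f(t)) for all t ∈ [0,T]. Then f(t) = 0 for all t ∈ [0,T]. -/
open Set Filter Topology Real

lemma h_of_mem_Ioc {r : ℝ} (hr : r ∈ Ioc 0 1) : h r = r * (1 - log r) := by
  rw [h, abs_of_nonpos (log_nonpos hr.1.le hr.2), sub_eq_add_neg]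

lemma h_pos_of_mem_Ioc {r : ℝ} (hr : r ∈ Ioc 0 1) : 0 < h r := by
  rw [h_of_mem_Ioc hr]
  have := log_nonpos hr.1.le hr.2
  exact mul_pos hr.1 (by linarith)

lemma tendsto_log_one_sub_log_nhdsGT_zero :
    Tendsto (fun r => log (1 - log r)) (𝓝[>] 0) atTop :=
  tendsto_log_atTop.comp <| tendsto_atTop_add_const_left _ 1 <|
    tendsto_neg_atBot_atTop.comp tendsto_log_nhdsGT_zero

lemma HasDerivAt.log_one_sub_log {f : ℝ → ℝ} {f' t : ℝ} (hf : HasDerivAt f f' t)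
    (ht : f t ∈ Ioc 0 1) :
    HasDerivAt (fun u => Real.log (1 - Real.log (f u))) (-f' / h (f t)) t := by
  have hlog : Real.log (f t) ≤ 0 := log_nonpos ht.1.le ht.2
  convert ((hf.log ht.1.ne').const_sub 1).log (by linarith) using 1
  rw [h_of_mem_Ioc ht]
  field_simp

lemma log_one_sub_log_le_add {f f' : ℝ → ℝ} {C a b : ℝ} (hab : a ≤ b)
    (hrange : ∀ t ∈ Icc a b, f t ∈ Ioc 0 1)
    (hdiff : ∀ t ∈ Icc a b, HasDerivAt f (f' t) t)
    (hineq : ∀ t ∈ Icc a b, f' t ≤ C * h (f t)) :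
    log (1 - log (f a)) ≤ log (1 - log (f b)) + C * (b - a) := by
  have hderiv : ∀ t ∈ Icc a b,
      HasDerivAt (fun u => C * u + log (1 - log (f u))) (C + -f' t / h (f t)) t := fun t ht =>
    ((hasDerivAt_id t).const_mul C).congr_deriv (mul_one C) |>.add
      ((hdiff t ht).log_one_sub_log (hrange t ht))
  have hmono : MonotoneOn (fun u => C * u + log (1 - log (f u))) (Icc a b) := by
    refine monotoneOn_of_hasDerivWithinAt_nonneg (convex_Icc a b)
      (fun t ht => (hderiv t ht).continuousAt.continuousWithinAt)
      (fun t ht => (hderiv t (interior_subset ht)).hasDerivWithinAt) fun t ht => ?_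
    have ht := interior_subset ht
    have hh := h_pos_of_mem_Ioc (hrange t ht)
    have : f' t / h (f t) ≤ C := (div_le_iff₀ hh).2 (hineq t ht)
    rw [neg_div]
    linarith
  have := hmono (left_mem_Icc.2 hab) (right_mem_Icc.2 hab) hab
  simp only at this
  linarith

lemma exists_last_eq_on_Icc {E : Type*} [TopologicalSpace E] [T1Space E] {f : ℝ → E}
    {a b : ℝ} {y : E} (hab : a ≤ b) (hf : ContinuousOn f (Icc a b)) (ha : f a = y) :
    ∃ c ∈ Icc a b, f c = y ∧ ∀ t ∈ Ioc c b, f t ≠ y := by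
  have hcompact : IsCompact (Icc a b ∩ f ⁻¹' {y}) :=
    isCompact_Icc.of_isClosed_subset (hf.preimage_isClosed_of_isClosed isClosed_Icc
      isClosed_singleton) inter_subset_left
  obtain ⟨c, ⟨hc, hfc⟩, hgreatest⟩ :=
    hcompact.exists_isGreatest ⟨a, left_mem_Icc.2 hab, ha⟩
  refine ⟨c, hc, hfc, fun t ht hft => ?_⟩
  have : t ≤ c := hgreatest ⟨⟨hc.1.trans ht.1.le, ht.2⟩, hft⟩
  exact ht.1.not_ge this

theorem osgood_zero_general (C T : ℝ) (hC : 0 < C) (f f' : ℝ → ℝ)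
    (hmap : ∀ t ∈ Set.Icc (0 : ℝ) T, f t ∈ Set.Icc (0 : ℝ) 1)
    (hdiff : ∀ t ∈ Set.Icc (0 : ℝ) T, HasDerivAt f (f' t) t)
    (h0 : f 0 = 0)
    (hineq : ∀ t ∈ Set.Icc (0 : ℝ) T, f' t ≤ C * h (f t)) :
    ∀ t ∈ Set.Icc (0 : ℝ) T, f t = 0 := by
  intro t₀ ht₀
  by_contra hne
  have hsub : Icc 0 t₀ ⊆ Icc 0 T := Icc_subset_Icc_right ht₀.2
  obtain ⟨t₁, ht₁, hft₁, hlast⟩ := exists_last_eq_on_Icc ht₀.1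
    (fun t ht => (hdiff t (hsub ht)).continuousAt.continuousWithinAt) h0
  have ht₁t₀ : t₁ < t₀ := ht₁.2.lt_of_ne fun heq => hne (heq ▸ hft₁)
  have hIoc : Ioc t₁ t₀ ⊆ Icc 0 T := fun t ht => hsub ⟨ht₁.1.trans ht.1.le, ht.2⟩
  have hrange : ∀ t ∈ Ioc t₁ t₀, f t ∈ Ioc 0 1 := fun t ht =>
    ⟨(hmap t (hIoc ht)).1.lt_of_ne (hlast t ht).symm, (hmap t (hIoc ht)).2⟩
  have hbound : ∀ s ∈ Ioc t₁ t₀,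
      log (1 - log (f s)) ≤ log (1 - log (f t₀)) + C * T := by
    intro s hs
    have hs' : Icc s t₀ ⊆ Ioc t₁ t₀ := Icc_subset_Ioc_iff hs.2 |>.2 ⟨hs.1, le_rfl⟩
    have := log_one_sub_log_le_add hs.2 (fun t ht => hrange t (hs' ht))
      (fun t ht => hdiff t (hIoc (hs' ht))) (fun t ht => hineq t (hIoc (hs' ht)))
    have : C * (t₀ - s) ≤ C * T :=
      mul_le_mul_of_nonneg_left (by linarith [ht₁.1, hs.1, ht₀.2]) hC.le
    linarith
  have hnear : Ioc t₁ t₀ ∈ 𝓝[>] t₁ := Ioc_mem_nhdsGT ht₁t₀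
  have hf_tendsto : Tendsto f (𝓝[>] t₁) (𝓝[>] 0) := tendsto_nhdsWithin_iff.2
    ⟨hft₁ ▸ (hdiff t₁ (hsub ht₁)).continuousAt.tendsto.mono_left nhdsWithin_le_nhds,
      mem_of_superset hnear fun t ht => (hrange t ht).1⟩
  obtain ⟨s, hs_large, hs⟩ :=
    ((tendsto_log_one_sub_log_nhdsGT_zero.comp hf_tendsto).eventually_gt_atTop
      (log (1 - log (f t₀)) + C * T) |>.and hnear).exists
  exact (hbound s hs).not_gt hs_large

/-- If `f : [0,T] → [0,1]` is differentiable with `f(0) = 0` and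
`f'(t) ≤ C h(f(t))` on `[0,T]`, then `f ≡ 0` on `[0,T]`. -/
theorem osgood_zero (C T : ℝ) (hC : 0 < C) (hT : 0 < T) (f f' : ℝ → ℝ)
    (hmap : ∀ t ∈ Set.Icc (0 : ℝ) T, f t ∈ Set.Icc (0 : ℝ) 1)
    (hdiff : ∀ t ∈ Set.Icc (0 : ℝ) T, HasDerivAt f (f' t) t)
    (h0 : f 0 = 0)
    (hineq : ∀ t ∈ Set.Icc (0 : ℝ) T, f' t ≤ C * h (f t)) :
    ∀ t ∈ Set.Icc (0 : ℝ) T, f t = 0 :=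
  osgood_zero_general C T hC f f' hmap hdiff h0 hineq
end

section
/- Let C > 0, a < b, and let g : [a,b) → (0,1) be a differentiable function with |g'(t)| ≤ C h(g(t)) for all t ∈ [a,b). Then for all t ∈ [a,b), g(t) ≥ e^{1 − exp(C(t−a))} · g(a)^{exp(C(t−a))}. -/
/-!
For `g` with values in `(0,1)` we have `h(g) = g (1 - log g)`, so `u = 1 - log g` satisfies
`u' = -g'/g ≤ C u`. Grönwall's inequality gives `u(t) ≤ u(a) e^{C(t-a)}`, and exponentiating
this bound on `-log g(t)` is the claim.
-/

open Real Set

theorem le_mul_exp_of_deriv_le_mul {f f' : ℝ → ℝ} {K a b : ℝ}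
    (hf : ∀ x ∈ Ico a b, HasDerivAt f (f' x) x) (bound : ∀ x ∈ Ico a b, f' x ≤ K * f x) :
    ∀ x ∈ Ico a b, f x ≤ f a * exp (K * (x - a)) := by
  intro x hx
  have hsub : Icc a x ⊆ Ico a b := fun s hs => ⟨hs.1, hs.2.trans_lt hx.2⟩
  have hsub' : Ico a x ⊆ Ico a b := Ico_subset_Icc_self.trans hsub
  have hgronwall := le_gronwallBound_of_liminf_deriv_right_le (δ := f a) (ε := 0)
    (fun s hs => (hf s (hsub hs)).continuousAt.continuousWithinAt)
    (fun s hs _ hr => (hf s (hsub' hs)).hasDerivWithinAt.liminf_right_slope_le hr)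
    le_rfl (fun s hs => (bound s (hsub' hs)).trans_eq (add_zero _).symm) x ⟨hx.1, le_rfl⟩
  rwa [gronwallBound_ε0] at hgronwall

theorem h_eq_of_mem_Ioo {r : ℝ} (hr : r ∈ Ioo (0 : ℝ) 1) : h r = r * (1 - log r) := by
  rw [h, abs_of_neg (log_neg hr.1 hr.2), sub_eq_add_neg]

theorem neg_div_le_mul_one_sub_log {C r r' : ℝ} (hr : r ∈ Ioo (0 : ℝ) 1)
    (hr' : |r'| ≤ C * h r) :
    -(r' / r) ≤ C * (1 - log r) :=
  calc -(r' / r) ≤ |r'| / r := by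
        rw [← neg_div]; exact div_le_div_of_nonneg_right (neg_le_abs r') hr.1.le
    _ ≤ C * h r / r := div_le_div_of_nonneg_right hr' hr.1.le
    _ = C * (1 - log r) := by rw [h_eq_of_mem_Ioo hr]; field_simp [hr.1.ne']

theorem exp_one_sub_mul_rpow_le {x y E : ℝ} (hx : 0 < x) (hy : 0 < y)
    (hlog : 1 - log x ≤ (1 - log y) * E) : exp (1 - E) * y ^ E ≤ x := by
  rw [rpow_def_of_pos hy, ← exp_add, ← exp_log hx, exp_le_exp]
  linarith

theorem gronwall_log_lower_bound_general (C a b : ℝ) (g g' : ℝ → ℝ)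
    (hmap : ∀ t ∈ Set.Ico a b, g t ∈ Set.Ioo (0 : ℝ) 1)
    (hdiff : ∀ t ∈ Set.Ico a b, HasDerivAt g (g' t) t)
    (hineq : ∀ t ∈ Set.Ico a b, |g' t| ≤ C * h (g t)) :
    ∀ t ∈ Set.Ico a b,
      g t ≥ Real.exp (1 - Real.exp (C * (t - a))) * g a ^ Real.exp (C * (t - a)) := by
  intro t ht
  have hlog_bound : 1 - log (g t) ≤ (1 - log (g a)) * exp (C * (t - a)) :=
    le_mul_exp_of_deriv_le_mul (f := fun s => 1 - log (g s))
      (fun s hs => ((hdiff s hs).log (hmap s hs).1.ne').const_sub 1)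
      (fun s hs => neg_div_le_mul_one_sub_log (hmap s hs) (hineq s hs)) t ht
  exact exp_one_sub_mul_rpow_le (hmap t ht).1 (hmap a ⟨le_rfl, ht.1.trans_lt ht.2⟩).1 hlog_bound

/-- If `g : [a,b) → (0,1)` is differentiable with `|g'(t)| ≤ C h(g(t))` on `[a,b)`,
then `g(t) ≥ e^{1 − exp(C(t−a))} · g(a)^{exp(C(t−a))}` on `[a,b)`. -/
theorem gronwall_log_lower_bound (C a b : ℝ) (hC : 0 < C) (hab : a < b) (g g' : ℝ → ℝ)
    (hmap : ∀ t ∈ Set.Ico a b, g t ∈ Set.Ioo (0 : ℝ) 1)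
    (hdiff : ∀ t ∈ Set.Ico a b, HasDerivAt g (g' t) t)
    (hineq : ∀ t ∈ Set.Ico a b, |g' t| ≤ C * h (g t)) :
    ∀ t ∈ Set.Ico a b,
      g t ≥ Real.exp (1 - Real.exp (C * (t - a))) * g a ^ Real.exp (C * (t - a)) :=
  gronwall_log_lower_bound_general C a b g g' hmap hdiff hineq
end

section
/- For every α ∈ [1/2, 1) there exists a constant C > 0 such that for all d > 0 and all points x, ỹ, y ∈ ℝ² with |y − ỹ| ≤ d/2 and |x − ỹ| ≤ 5d, one has |x − y|^{2α} ∫_{B(ỹ,6d)} |y − z|^{−1} |z − x|^{−2α} dz ≤ C d, where B(ỹ,6d) is the open ball of center ỹ and radius 6d and the integral is with respect to two-dimensional Lebesgue measure. -/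
/-!
Put `s = 2α` and `ρ = |x − y|/2`, and split the ball at `B(x, ρ)`. Outside `B(x, ρ)` we have
`|z − x|^{-s} ≤ ρ^{-s}`, and the ball lies in `B(y, 7d)`, where `∫ |z − y|⁻¹ = 14πd`. Inside
`B(x, ρ)` we have `|y − z|⁻¹ ≤ ρ⁻¹`, and `∫_{B(x,ρ)} |z − x|^{-s} = 2πρ^{2-s}/(2 - s)` in polar
coordinates. Multiplying by `|x − y|^s = 2^s ρ^s` cancels the powers of `ρ` and leaves
`2^s · 2π (7d + ρ/(2 - s))`, with `ρ ≤ 11d/4`.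
-/

open MeasureTheory Set Metric Real

theorem integral_ball_zero_norm_rpow_neg {R s : ℝ} (hR : 0 ≤ R) (hs : s < 2) :
    ∫ z in ball (0 : ℂ) R, ‖z‖ ^ (-s) = 2 * π / (2 - s) * R ^ (2 - s) := by
  have h_radial : ∫ z in ball (0 : ℂ) R, ‖z‖ ^ (-s) =
      ∫ z : ℂ, (Iio R).indicator (fun t ↦ t ^ (-s)) ‖z‖ := by
    rw [← integral_indicator measurableSet_ball]
    congr 1 with z
    simp [indicator]
  have h_unit : volume.real (ball (0 : ℂ) 1) = π := by
    simp [Measure.real, Complex.volume_ball]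
  have h_radius : ∫ t in Ioi (0 : ℝ), t ^ (2 - 1) • (Iio R).indicator (fun t ↦ t ^ (-s)) t =
      ∫ t in Ioc 0 R, t ^ (1 - s) := by
    rw [integral_Ioc_eq_integral_Ioo, ← Ioi_inter_Iio, ← setIntegral_indicator measurableSet_Iio]
    refine setIntegral_congr_fun measurableSet_Ioi fun t (ht : 0 < t) ↦ ?_
    by_cases htR : t < R
    · simp [htR, rpow_add ht, sub_eq_add_neg]
    · simp [htR]
  rw [h_radial, integral_fun_norm_addHaar, Complex.finrank_real_complex, h_unit, h_radius,
    ← intervalIntegral.integral_of_le hR, integral_rpow (Or.inl (by linarith)),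
    zero_rpow (by linarith)]
  simp only [nsmul_eq_mul, smul_eq_mul]
  rw [show 1 - s + 1 = 2 - s by ring]
  ring

theorem setLIntegral_ball_norm_sub_rpow_neg (c : ℂ) {R s : ℝ} (hR : 0 ≤ R) (hs : s < 2) :
    ∫⁻ z in ball c R, ENNReal.ofReal (‖z - c‖ ^ (-s)) =
      ENNReal.ofReal (2 * π / (2 - s) * R ^ (2 - s)) := by
  have h_preimage : (· - c) ⁻¹' ball 0 R = ball c R := by
    ext z
    simp [dist_eq_norm]
  have h_int : IntegrableOn (fun z : ℂ ↦ ‖z‖ ^ (-s)) (ball 0 R) :=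
    integrableOn_ball_of_norm_le_rpow (C := 1) (by simp) (by simpa using hs)
      (.of_forall fun z ↦ by simp [abs_of_nonneg (rpow_nonneg (norm_nonneg z) _)])
      (by fun_prop : Measurable fun z : ℂ ↦ ‖z‖ ^ (-s)).aestronglyMeasurable
  rw [← h_preimage, (measurePreserving_sub_right volume c).setLIntegral_comp_preimage
      measurableSet_ball (f := fun z ↦ ENNReal.ofReal (‖z‖ ^ (-s))) (by fun_prop),
    ← integral_ball_zero_norm_rpow_neg hR hs,
    ofReal_integral_eq_lintegral_ofReal h_int (.of_forall fun z ↦ by positivity)]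

section TwoPoles

variable {x y : ℂ} {s ρ R : ℝ}

theorem setLIntegral_diff_ball_le (hs : 0 ≤ s) (hρ : 0 < ρ) (hR : 0 ≤ R) {S : Set ℂ}
    (hS : S ⊆ ball y R) :
    ∫⁻ z in S \ ball x ρ, ENNReal.ofReal (‖y - z‖⁻¹ * ‖z - x‖ ^ (-s)) ≤
      ENNReal.ofReal (ρ ^ (-s) * (2 * π * R)) := by
  have h_pointwise : ∀ z ∈ S \ ball x ρ, ENNReal.ofReal (‖y - z‖⁻¹ * ‖z - x‖ ^ (-s)) ≤
      ENNReal.ofReal (ρ ^ (-s)) * ENNReal.ofReal (‖z - y‖ ^ (-1 : ℝ)) := by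
    rintro z ⟨-, hz⟩
    rw [mem_ball, dist_eq_norm, not_lt] at hz
    rw [← ENNReal.ofReal_mul (by positivity), rpow_neg_one, norm_sub_rev z y, mul_comm]
    exact ENNReal.ofReal_le_ofReal
      (mul_le_mul_of_nonneg_right (rpow_le_rpow_of_nonpos hρ hz (by linarith)) (by positivity))
  calc ∫⁻ z in S \ ball x ρ, ENNReal.ofReal (‖y - z‖⁻¹ * ‖z - x‖ ^ (-s))
      ≤ ∫⁻ z in S \ ball x ρ, ENNReal.ofReal (ρ ^ (-s)) * ENNReal.ofReal (‖z - y‖ ^ (-1 : ℝ)) :=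
        setLIntegral_mono (by fun_prop) h_pointwise
    _ ≤ ∫⁻ z in ball y R, ENNReal.ofReal (ρ ^ (-s)) * ENNReal.ofReal (‖z - y‖ ^ (-1 : ℝ)) :=
        lintegral_mono_set (sdiff_subset.trans hS)
    _ = ENNReal.ofReal (ρ ^ (-s) * (2 * π * R)) := by
        rw [lintegral_const_mul _ (by fun_prop),
          setLIntegral_ball_norm_sub_rpow_neg y hR (by norm_num),
          ← ENNReal.ofReal_mul (by positivity)]
        norm_num

theorem setLIntegral_ball_le_of_two_mul_le_dist (hs : s < 2) (hρ : 0 < ρ)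
    (hρxy : 2 * ρ ≤ ‖x - y‖) :
    ∫⁻ z in ball x ρ, ENNReal.ofReal (‖y - z‖⁻¹ * ‖z - x‖ ^ (-s)) ≤
      ENNReal.ofReal (ρ⁻¹ * (2 * π / (2 - s) * ρ ^ (2 - s))) := by
  have h_pointwise : ∀ z ∈ ball x ρ, ENNReal.ofReal (‖y - z‖⁻¹ * ‖z - x‖ ^ (-s)) ≤
      ENNReal.ofReal ρ⁻¹ * ENNReal.ofReal (‖z - x‖ ^ (-s)) := by
    intro z hz
    rw [mem_ball, dist_eq_norm] at hz
    have h_far : ρ ≤ ‖y - z‖ := by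
      linarith [norm_sub_le_norm_sub_add_norm_sub x z y, norm_sub_rev x z, norm_sub_rev z y]
    rw [← ENNReal.ofReal_mul (by positivity)]
    gcongr
  calc ∫⁻ z in ball x ρ, ENNReal.ofReal (‖y - z‖⁻¹ * ‖z - x‖ ^ (-s))
      ≤ ∫⁻ z in ball x ρ, ENNReal.ofReal ρ⁻¹ * ENNReal.ofReal (‖z - x‖ ^ (-s)) :=
        setLIntegral_mono (by fun_prop) h_pointwise
    _ = ENNReal.ofReal (ρ⁻¹ * (2 * π / (2 - s) * ρ ^ (2 - s))) := by
        rw [lintegral_const_mul _ (by fun_prop), setLIntegral_ball_norm_sub_rpow_neg x hρ.le hs,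
          ← ENNReal.ofReal_mul (by positivity)]

theorem setIntegral_inv_norm_mul_rpow_le (hs0 : 0 ≤ s) (hs2 : s < 2) (hρ : 0 < ρ)
    (hρxy : 2 * ρ ≤ ‖x - y‖) (hR : 0 ≤ R) {S : Set ℂ} (hS : S ⊆ ball y R) :
    ∫ z in S, ‖y - z‖⁻¹ * ‖z - x‖ ^ (-s) ≤
      ρ ^ (-s) * (2 * π * R) + ρ⁻¹ * (2 * π / (2 - s) * ρ ^ (2 - s)) := by
  have h_gap : 0 < 2 - s := by linarith
  have h_nonneg : ∀ z : ℂ, 0 ≤ ‖y - z‖⁻¹ * ‖z - x‖ ^ (-s) := fun z ↦ by positivity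
  rw [integral_eq_lintegral_of_nonneg_ae (.of_forall h_nonneg) (by fun_prop)]
  refine ENNReal.toReal_le_of_le_ofReal (by positivity) ?_
  calc ∫⁻ z in S, ENNReal.ofReal (‖y - z‖⁻¹ * ‖z - x‖ ^ (-s))
      ≤ ∫⁻ z in (S \ ball x ρ) ∪ ball x ρ, ENNReal.ofReal (‖y - z‖⁻¹ * ‖z - x‖ ^ (-s)) :=
        lintegral_mono_set (by simp)
    _ ≤ (∫⁻ z in S \ ball x ρ, ENNReal.ofReal (‖y - z‖⁻¹ * ‖z - x‖ ^ (-s))) +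
          ∫⁻ z in ball x ρ, ENNReal.ofReal (‖y - z‖⁻¹ * ‖z - x‖ ^ (-s)) :=
        lintegral_union_le _ _ _
    _ ≤ ENNReal.ofReal (ρ ^ (-s) * (2 * π * R)) +
          ENNReal.ofReal (ρ⁻¹ * (2 * π / (2 - s) * ρ ^ (2 - s))) :=
        add_le_add (setLIntegral_diff_ball_le hs0 hρ hR hS)
          (setLIntegral_ball_le_of_two_mul_le_dist hs2 hρ hρxy)
    _ = _ := (ENNReal.ofReal_add (by positivity) (by positivity)).symm

theorem norm_sub_rpow_mul_setIntegral_le (hs0 : 0 < s) (hs2 : s < 2) (hR : 0 ≤ R) {S : Set ℂ}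
    (hS : S ⊆ ball y R) :
    ‖x - y‖ ^ s * ∫ z in S, ‖y - z‖⁻¹ * ‖z - x‖ ^ (-s) ≤
      2 ^ s * (2 * π) * (R + ‖x - y‖ / 2 / (2 - s)) := by
  rcases eq_or_ne x y with rfl | hxy
  · rw [sub_self, norm_zero, zero_rpow hs0.ne', zero_mul]
    positivity
  set ρ := ‖x - y‖ / 2 with hρ_def
  have hρ : 0 < ρ := div_pos (norm_pos_iff.2 (sub_ne_zero.2 hxy)) two_pos
  have h_dist : ‖x - y‖ ^ s = 2 ^ s * ρ ^ s := by
    rw [← mul_rpow zero_le_two hρ.le, hρ_def, mul_div_cancel₀ _ two_ne_zero]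
  calc ‖x - y‖ ^ s * ∫ z in S, ‖y - z‖⁻¹ * ‖z - x‖ ^ (-s)
      ≤ ‖x - y‖ ^ s * (ρ ^ (-s) * (2 * π * R) + ρ⁻¹ * (2 * π / (2 - s) * ρ ^ (2 - s))) := by
        gcongr
        exact setIntegral_inv_norm_mul_rpow_le hs0.le hs2 hρ (by linarith) hR hS
    _ = 2 ^ s * (2 * π) * (R + ρ / (2 - s)) := by
        rw [h_dist, rpow_neg hρ.le, rpow_sub hρ, rpow_two]
        field_simp

end TwoPoles

/-- For every `α ∈ [1/2, 1)` there is `C > 0` such that for all `d > 0` and points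
`x, ỹ, y` with `|y − ỹ| ≤ d/2` and `|x − ỹ| ≤ 5d`,
`|x − y|^{2α} ∫_{B(ỹ,6d)} |y − z|⁻¹ |z − x|^{−2α} dz ≤ C d`. -/
theorem near_corner_integral_bound (α : ℝ) (hα : α ∈ Set.Ico (1 / 2 : ℝ) 1) :
    ∃ C : ℝ, 0 < C ∧ ∀ d : ℝ, 0 < d → ∀ x yt y : ℂ,
      ‖y - yt‖ ≤ d / 2 → ‖x - yt‖ ≤ 5 * d →
      ‖x - y‖ ^ (2 * α) * ∫ z in Metric.ball yt (6 * d), ‖y - z‖⁻¹ * ‖z - x‖ ^ (-(2 * α)) ≤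
        C * d := by
  obtain ⟨hα_low, hα_high⟩ := hα
  have h_gap : 0 < 2 - 2 * α := by linarith
  refine ⟨4 * (2 * π) * (7 + 11 / 4 / (2 - 2 * α)), by positivity, ?_⟩
  intro d hd x yt y hy hx
  have h_ball : ball yt (6 * d) ⊆ ball y (7 * d) := by
    refine ball_subset_ball' ?_
    linarith [dist_eq_norm yt y, norm_sub_rev y yt]
  have h_two_rpow : (2 : ℝ) ^ (2 * α) ≤ 4 := by
    calc (2 : ℝ) ^ (2 * α) ≤ 2 ^ (2 : ℝ) := rpow_le_rpow_of_exponent_le one_le_two (by linarith)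
      _ = 4 := by norm_num
  have h_xy : ‖x - y‖ ≤ 11 / 2 * d := by
    linarith [norm_sub_le_norm_sub_add_norm_sub x yt y, norm_sub_rev yt y]
  calc _ ≤ 2 ^ (2 * α) * (2 * π) * (7 * d + ‖x - y‖ / 2 / (2 - 2 * α)) :=
        norm_sub_rpow_mul_setIntegral_le (by linarith) (by linarith) (by positivity) h_ball
    _ ≤ 4 * (2 * π) * (7 * d + 11 / 2 * d / 2 / (2 - 2 * α)) := by gcongr
    _ = _ := by ring
end

section
/- For every α ∈ [1/2, 1) there exists a constant C > 0 such that for all d ∈ (0, 1/2] and all points x, y ∈ ℝ² and ỹ in the closed unit disk with |y − ỹ| ≤ d/2 and |x − ỹ| ≤ 5d, one has |x − y|^{2α−1} ∫_{D \ B(ỹ,6d)} |y − z|^{−1} |z − x|^{−2α} dz ≤ C (1 + |log d|), where D is the open unit disk, B(ỹ,6d) is the open ball of center ỹ and radius 6d, and the integral is with respect to two-dimensional Lebesgue measure. -/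
/-!
For `z ∈ D \ B(ỹ, 6d)` put `r = |z − ỹ| ≥ 6d`; then `|y − z| ≥ r/2` and `|z − x| ≥ r/6`, so the
integrand is at most `2·6^{2α} r^{−1−2α}`. Enlarging the region to the annulus `6d ≤ r ≤ 3` and
integrating in polar coordinates bounds the integral by
`4π·6^{2α} ∫_{6d}^3 r^{−2α} dr ≤ 4π·6^{2α} (6d)^{1−2α} log(3/(6d))`, using `r^{−2α} ≤ (6d)^{1−2α}/r`
for `2α ≥ 1`. The prefactor `|x − y|^{2α−1} ≤ (6d)^{2α−1}` cancels the power of `d`.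
-/

open MeasureTheory Set Metric Real

theorem setIntegral_annulus_comp_norm_sub (c : ℂ) (f : ℝ → ℝ) {a b : ℝ} (ha : 0 < a)
    (hab : a ≤ b) :
    ∫ z in closedBall c b \ ball c a, f ‖z - c‖ = 2 * π * ∫ r in a..b, r * f r := by
  have hannulus : closedBall c b \ ball c a = (fun z => ‖z - c‖) ⁻¹' Icc a b := by
    ext z
    simp [dist_eq_norm, and_comm]
  have hIoi : Ioi 0 ∩ Icc a b = Icc a b :=
    inter_eq_self_of_subset_right ((Icc_subset_Ioi_iff hab).2 ha)
  rw [← integral_indicator (measurableSet_closedBall.diff measurableSet_ball), hannulus]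
  change ∫ z, ((fun z => ‖z - c‖) ⁻¹' Icc a b).indicator (f ∘ fun z => ‖z - c‖) z = _
  simp only [indicator_comp_right]
  rw [integral_sub_right_eq_self (fun w => (Icc a b).indicator f ‖w‖) c,
    integral_fun_norm_addHaar volume, Complex.finrank_real_complex,
    measureReal_def, Complex.volume_ball]
  simp only [Nat.add_one_sub_one, pow_one, smul_eq_mul]
  have hmul : (fun r => r * (Icc a b).indicator f r) = (Icc a b).indicator (fun r => r * f r) :=
    funext fun r => (indicator_mul_right _ (fun r => r) f).symm
  rw [hmul, setIntegral_indicator measurableSet_Icc, hIoi, integral_Icc_eq_integral_Ioc,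
    ← intervalIntegral.integral_of_le hab]
  simp
  ring

theorem intervalIntegral_rpow_neg_le {s a b : ℝ} (hs : 1 ≤ s) (ha : 0 < a) (hab : a ≤ b) :
    ∫ r in a..b, r ^ (-s) ≤ a ^ (1 - s) * log (b / a) := by
  have hpos : ∀ r ∈ uIcc a b, 0 < r := fun r hr =>
    ha.trans_le (by rw [uIcc_of_le hab] at hr; exact hr.1)
  calc ∫ r in a..b, r ^ (-s) ≤ ∫ r in a..b, a ^ (1 - s) * r⁻¹ := by
        refine intervalIntegral.integral_mono_on hab ?_ ?_ fun r hr => ?_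
        · exact (continuousOn_id.rpow_const fun r hr => Or.inl (hpos r hr).ne').intervalIntegrable
        · exact (continuousOn_const.mul
            (continuousOn_inv₀.mono fun r hr => (hpos r hr).ne')).intervalIntegrable
        · have hr0 : 0 < r := ha.trans_le hr.1
          calc r ^ (-s) = r ^ (1 - s) * r⁻¹ := by
                rw [← rpow_neg_one, ← rpow_add hr0]; ring_nf
            _ ≤ a ^ (1 - s) * r⁻¹ :=
                mul_le_mul_of_nonneg_right (rpow_le_rpow_of_nonpos ha hr.1 (by linarith))
                  (inv_nonneg.2 hr0.le)
    _ = a ^ (1 - s) * log (b / a) := by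
        rw [intervalIntegral.integral_const_mul, integral_inv_of_pos ha (ha.trans_le hab)]

theorem inv_norm_sub_mul_rpow_neg_le_of_far {E : Type*} [SeminormedAddCommGroup E]
    {x y c z : E} {d s : ℝ} (hd : 0 < d) (hs : 0 ≤ s) (hy : ‖y - c‖ ≤ d / 2)
    (hx : ‖x - c‖ ≤ 5 * d) (hz : 6 * d ≤ ‖z - c‖) :
    ‖y - z‖⁻¹ * ‖z - x‖ ^ (-s) ≤ 2 * 6 ^ s * (‖z - c‖ ^ (-s) / ‖z - c‖) := by
  set r := ‖z - c‖
  have hr : 0 < r := by linarith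
  have hyz : r / 2 ≤ ‖y - z‖ := by
    have := norm_sub_le_norm_sub_add_norm_sub z y c
    rw [norm_sub_rev z y] at this
    linarith
  have hzx : r / 6 ≤ ‖z - x‖ := by
    have := norm_sub_le_norm_sub_add_norm_sub z x c
    linarith
  calc ‖y - z‖⁻¹ * ‖z - x‖ ^ (-s) ≤ (r / 2)⁻¹ * (r / 6) ^ (-s) := by
        refine mul_le_mul (inv_anti₀ (by positivity) hyz) ?_ (by positivity) (by positivity)
        exact rpow_le_rpow_of_nonpos (by positivity) hzx (neg_nonpos.2 hs)
    _ = 2 * 6 ^ s * (r ^ (-s) / r) := by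
        rw [div_rpow hr.le (by norm_num), rpow_neg (by norm_num : (0:ℝ) ≤ 6)]
        field_simp

theorem setIntegral_far_kernel_le {x y c : ℂ} {d s : ℝ} (hc : ‖c‖ ≤ 1) (hd : 0 < d)
    (hd2 : d ≤ 1 / 2) (hs : 1 ≤ s) (hy : ‖y - c‖ ≤ d / 2) (hx : ‖x - c‖ ≤ 5 * d) :
    ∫ z in ball 0 1 \ ball c (6 * d), ‖y - z‖⁻¹ * ‖z - x‖ ^ (-s) ≤
      4 * π * 6 ^ s * (6 * d) ^ (1 - s) * log (3 / (6 * d)) := by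
  set a := 6 * d
  have ha : 0 < a := by positivity
  have ha3 : a ≤ 3 := by linarith
  set g : ℂ → ℝ := fun z => 2 * 6 ^ s * (‖z - c‖ ^ (-s) / ‖z - c‖)
  have hfar : ∀ z ∈ closedBall c 3 \ ball c a, a ≤ ‖z - c‖ := fun z hz => by
    simpa [dist_eq_norm] using hz.2
  have hsub : ball 0 1 \ ball c a ⊆ closedBall c 3 \ ball c a := fun z hz => by
    refine ⟨?_, hz.2⟩
    have hz1 : ‖z‖ < 1 := by simpa using hz.1
    rw [mem_closedBall, dist_eq_norm]
    linarith [norm_sub_le z c]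
  have hg : IntegrableOn g (closedBall c 3 \ ball c a) := by
    refine ContinuousOn.integrableOn_compact ((isCompact_closedBall c 3).diff isOpen_ball) ?_
    have hne : ∀ z ∈ closedBall c 3 \ ball c a, ‖z - c‖ ≠ 0 := fun z hz =>
      (ha.trans_le (hfar z hz)).ne'
    exact continuousOn_const.mul
      (((continuous_norm.comp (continuous_sub_right c)).continuousOn.rpow_const
        fun z hz => Or.inl (hne z hz)).div
        (continuous_norm.comp (continuous_sub_right c)).continuousOn hne)
  calc ∫ z in ball 0 1 \ ball c a, ‖y - z‖⁻¹ * ‖z - x‖ ^ (-s)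
      ≤ ∫ z in ball 0 1 \ ball c a, g z := by
        refine integral_mono_of_nonneg (.of_forall fun z => by positivity) (hg.mono_set hsub) ?_
        refine (ae_restrict_iff' (measurableSet_ball.diff measurableSet_ball)).2 (.of_forall ?_)
        exact fun z hz => inv_norm_sub_mul_rpow_neg_le_of_far hd (by linarith) hy hx
          (hfar z (hsub hz))
    _ ≤ ∫ z in closedBall c 3 \ ball c a, g z :=
        setIntegral_mono_set hg (.of_forall fun z => by positivity) hsub.eventuallyLE
    _ = 2 * 6 ^ s * (2 * π * ∫ r in a..3, r ^ (-s)) := by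
        rw [integral_const_mul,
          setIntegral_annulus_comp_norm_sub c (fun r => r ^ (-s) / r) ha ha3]
        congr 2
        refine intervalIntegral.integral_congr fun r hr => ?_
        rw [uIcc_of_le ha3] at hr
        field_simp [(ha.trans_le hr.1).ne']
    _ ≤ 2 * 6 ^ s * (2 * π * (a ^ (1 - s) * log (3 / a))) := by
        gcongr
        exact intervalIntegral_rpow_neg_le hs ha ha3
    _ = 4 * π * 6 ^ s * a ^ (1 - s) * log (3 / a) := by ring

/-- For every `α ∈ [1/2, 1)` there is `C > 0` such that for all `d ∈ (0, 1/2]`, points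
`x, y` and `ỹ` in the closed unit disk with `|y − ỹ| ≤ d/2` and `|x − ỹ| ≤ 5d`,
`|x − y|^{2α−1} ∫_{D \ B(ỹ,6d)} |y − z|⁻¹ |z − x|^{−2α} dz ≤ C (1 + |log d|)`. -/
theorem far_region_integral_bound (α : ℝ) (hα : α ∈ Set.Ico (1 / 2 : ℝ) 1) :
    ∃ C : ℝ, 0 < C ∧ ∀ d : ℝ, d ∈ Set.Ioc (0 : ℝ) (1 / 2) → ∀ x y : ℂ,
      ∀ yt ∈ Metric.closedBall (0 : ℂ) 1,
      ‖y - yt‖ ≤ d / 2 → ‖x - yt‖ ≤ 5 * d →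
      ‖x - y‖ ^ (2 * α - 1) *
          ∫ z in Metric.ball (0 : ℂ) 1 \ Metric.ball yt (6 * d),
            ‖y - z‖⁻¹ * ‖z - x‖ ^ (-(2 * α)) ≤
        C * (1 + |Real.log d|) := by
  refine ⟨4 * π * 6 ^ (2 * α), by positivity, fun d ⟨hd, hd2⟩ x y yt hyt hy hx => ?_⟩
  have hs : 1 ≤ 2 * α := by linarith [hα.1]
  have hxy : ‖x - y‖ ≤ 6 * d := by
    linarith [norm_sub_le_norm_sub_add_norm_sub x yt y, norm_sub_rev yt y]
  have hlog : log (3 / (6 * d)) ≤ 1 + |log d| := by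
    have : log (3 / (6 * d)) ≤ log d⁻¹ :=
      log_le_log (by positivity) (by field_simp; linarith)
    linarith [log_inv d, neg_le_abs (log d)]
  have hI : 0 ≤ ∫ z in ball (0 : ℂ) 1 \ ball yt (6 * d), ‖y - z‖⁻¹ * ‖z - x‖ ^ (-(2 * α)) :=
    setIntegral_nonneg (measurableSet_ball.diff measurableSet_ball) fun z _ => by positivity
  calc _ ≤ (6 * d) ^ (2 * α - 1) *
        (4 * π * 6 ^ (2 * α) * (6 * d) ^ (1 - 2 * α) * log (3 / (6 * d))) :=
        mul_le_mul (rpow_le_rpow (norm_nonneg _) hxy (by linarith)) (setIntegral_far_kernel_le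
          (by simpa using hyt) hd hd2 hs hy hx) hI (by positivity)
    _ = 4 * π * 6 ^ (2 * α) * log (3 / (6 * d)) := by
        have hcancel : (6 * d) ^ (2 * α - 1) * (6 * d) ^ (1 - 2 * α) = 1 := by
          rw [← rpow_add (by positivity)]
          simp
        linear_combination (4 * π * 6 ^ (2 * α) * log (3 / (6 * d))) * hcancel
    _ ≤ 4 * π * 6 ^ (2 * α) * (1 + |log d|) := by gcongr
end

section
/- For every α ∈ [1/2, 1) there exists a constant C > 0 such that for all d ∈ (0, 1/2], all x in the closed unit disk, and all y, ỹ ∈ ℝ² with ỹ in the closed unit disk, |y − ỹ| ≤ d/2 and |x − ỹ| ≥ 5d, one has |x − y|^{2α−1} ∫_{D \ (B(x,2d) ∪ B(ỹ,2d))} |y − z|^{−1} |z − x|^{−2α} dz ≤ C (1 + |log d|), where D is the open unit disk and the integral is with respect to two-dimensional Lebesgue measure. -/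
/-!
Put `ρ = ‖x - y‖ / 2`. On the region of integration the kernel `‖y - z‖⁻¹ ‖z - x‖^(-2α)` is at
most `ρ^(1-2α) ‖z - x‖⁻²` near `x`, `ρ^(1-2α) ‖z - y‖⁻²` near `y`, and `3 ρ^(1-2α) ‖z - x‖⁻²`
away from both. Each of the three pieces lies in an annulus whose radii have ratio at most `1/d`,
and in the plane `∫ ‖z - w‖⁻²` over the annulus `s ≤ ‖z - w‖ ≤ t` is `2π log (t/s)`. Finally the
prefactor `‖x - y‖^(2α-1)` cancels `ρ^(1-2α)` up to the factor `2^(2α-1) ≤ 2`.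
-/

open MeasureTheory Metric Set Real Module

section Annulus

variable {E : Type*} [NormedAddCommGroup E]

noncomputable def annulusInvSq (w : E) (s t : ℝ) : E → ℝ :=
  (closedBall w t \ ball w s).indicator fun z => ‖z - w‖ ^ (-2 : ℝ)

theorem mem_closedBall_diff_ball {w z : E} {s t : ℝ} :
    z ∈ closedBall w t \ ball w s ↔ s ≤ ‖z - w‖ ∧ ‖z - w‖ ≤ t := by
  simp only [mem_sdiff, mem_closedBall, mem_ball, dist_eq_norm, not_lt, and_comm]

theorem annulusInvSq_nonneg (w : E) (s t : ℝ) (z : E) : 0 ≤ annulusInvSq w s t z :=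
  indicator_nonneg (fun _ _ => by positivity) z

theorem annulusInvSq_of_le {w z : E} {s t : ℝ} (hs : s ≤ ‖z - w‖) (ht : ‖z - w‖ ≤ t) :
    annulusInvSq w s t z = ‖z - w‖ ^ (-2 : ℝ) :=
  indicator_of_mem (mem_closedBall_diff_ball.2 ⟨hs, ht⟩) _

variable [MeasurableSpace E] [OpensMeasurableSpace E] (μ : Measure E)

theorem integrable_annulusInvSq [ProperSpace E] [IsFiniteMeasureOnCompacts μ] (w : E)
    {s t : ℝ} (hs : 0 < s) : Integrable (annulusInvSq w s t) μ := by
  refine IntegrableOn.integrable_indicator ?_ (measurableSet_closedBall.diff measurableSet_ball)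
  refine ContinuousOn.integrableOn_compact ((isCompact_closedBall w t).diff isOpen_ball) ?_
  refine ContinuousOn.rpow_const (by fun_prop) fun z hz => Or.inl ?_
  exact (hs.trans_le (mem_closedBall_diff_ball.1 hz).1).ne'

end Annulus

section Radial

variable {E : Type*} [NormedAddCommGroup E] [NormedSpace ℝ E] [FiniteDimensional ℝ E]
  [Nontrivial E] [MeasurableSpace E] [BorelSpace E] (μ : Measure E) [μ.IsAddHaarMeasure]

theorem integral_annulus_norm_sub_rpow_neg_finrank (w : E) {s t : ℝ} (hs : 0 < s)
    (hst : s ≤ t) :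
    ∫ z in closedBall w t \ ball w s, ‖z - w‖ ^ (-(finrank ℝ E : ℝ)) ∂μ
      = finrank ℝ E * μ.real (ball 0 1) * log (t / s) := by
  set n := finrank ℝ E
  set F : ℝ → ℝ := (Icc s t).indicator (· ^ (-(n : ℝ)))
  have hF : (closedBall w t \ ball w s).indicator (fun z => ‖z - w‖ ^ (-(n : ℝ)))
      = fun z => F ‖z - w‖ := by
    ext z
    simp only [F, indicator, mem_closedBall_diff_ball, mem_Icc]
  have hradial : ∫ r in Ioi (0 : ℝ), r ^ (n - 1) • F r = log (t / s) := by
    have hn : 1 ≤ n := finrank_pos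
    have hF' : (fun r : ℝ => r ^ (n - 1) • F r) = (Icc s t).indicator (fun r => r⁻¹) := by
      ext r
      by_cases hr : r ∈ Icc s t
      · have hr₀ : 0 < r := hs.trans_le hr.1
        have hpow : r ^ n = r ^ (n - 1) * r := by rw [← pow_succ, Nat.sub_add_cancel hn]
        simp only [F, indicator_of_mem hr, smul_eq_mul, rpow_neg hr₀.le, rpow_natCast, hpow]
        field_simp
      · simp [F, indicator_of_notMem hr]
    rw [hF', setIntegral_indicator measurableSet_Icc,
      inter_eq_right.mpr (Icc_subset_Ioi_iff hst |>.mpr hs), integral_Icc_eq_integral_Ioc,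
      ← intervalIntegral.integral_of_le hst, integral_inv_of_pos hs (hs.trans_le hst)]
  rw [← integral_indicator (measurableSet_closedBall.diff measurableSet_ball), hF,
    integral_sub_right_eq_self (fun z => F ‖z‖) w, integral_fun_norm_addHaar, hradial,
    nsmul_eq_mul, smul_eq_mul, mul_assoc]

end Radial

theorem integral_annulusInvSq (w : ℂ) {s t : ℝ} (hs : 0 < s) (hst : s ≤ t) :
    ∫ z, annulusInvSq w s t z = 2 * π * log (t / s) := by
  rw [annulusInvSq, integral_indicator (measurableSet_closedBall.diff measurableSet_ball)]
  simpa [Complex.finrank_real_complex, measureReal_def, Complex.volume_ball, mul_comm] using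
    integral_annulus_norm_sub_rpow_neg_finrank volume w hs hst

section Kernel

variable {E : Type*} [NormedAddCommGroup E] {α ρ : ℝ} {x y z : E}

noncomputable def twoPoleKernel (α : ℝ) (x y z : E) : ℝ := ‖y - z‖⁻¹ * ‖z - x‖ ^ (-(2 * α))

theorem twoPoleKernel_nonneg (α : ℝ) (x y z : E) : 0 ≤ twoPoleKernel α x y z := by
  unfold twoPoleKernel; positivity

theorem twoPoleKernel_le_near_left (hρ : ‖x - y‖ = 2 * ρ) (hα : α ≤ 1) (hz₀ : 0 < ‖z - x‖)
    (hz : ‖z - x‖ ≤ ρ) : twoPoleKernel α x y z ≤ ρ ^ (1 - 2 * α) * ‖z - x‖ ^ (-2 : ℝ) := by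
  have hρ₀ : 0 < ρ := hz₀.trans_le hz
  have hyz : ρ ≤ ‖y - z‖ := by
    have := norm_sub_le_norm_sub_add_norm_sub x z y
    rw [norm_sub_rev x z, norm_sub_rev z y] at this
    linarith
  calc twoPoleKernel α x y z = ‖y - z‖⁻¹ * ‖z - x‖ ^ (2 - 2 * α) * ‖z - x‖ ^ (-2 : ℝ) := by
        rw [twoPoleKernel, mul_assoc, ← rpow_add hz₀]; ring_nf
    _ ≤ ρ⁻¹ * ρ ^ (2 - 2 * α) * ‖z - x‖ ^ (-2 : ℝ) := by
        gcongr
        linarith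
    _ = ρ ^ (1 - 2 * α) * ‖z - x‖ ^ (-2 : ℝ) := by
        rw [← rpow_neg_one, ← rpow_add hρ₀]; ring_nf

theorem twoPoleKernel_le_near_right (hα : 0 ≤ α) (hzx : ρ ≤ ‖z - x‖)
    (hz₀ : 0 < ‖z - y‖) (hz : ‖z - y‖ ≤ ρ) :
    twoPoleKernel α x y z ≤ ρ ^ (1 - 2 * α) * ‖z - y‖ ^ (-2 : ℝ) := by
  have hρ₀ : 0 < ρ := hz₀.trans_le hz
  calc twoPoleKernel α x y z = ‖z - y‖ * ‖z - y‖ ^ (-2 : ℝ) * ‖z - x‖ ^ (-(2 * α)) := by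
        rw [twoPoleKernel, norm_sub_rev y z, ← rpow_neg_one, show (-1 : ℝ) = 1 + -2 by norm_num,
          rpow_add hz₀, rpow_one]
    _ ≤ ρ * ‖z - y‖ ^ (-2 : ℝ) * ρ ^ (-(2 * α)) := by
        gcongr ?_ * _ * ?_
        exact rpow_le_rpow_of_nonpos hρ₀ hzx (by linarith)
    _ = ρ ^ (1 - 2 * α) * ‖z - y‖ ^ (-2 : ℝ) := by
        rw [show 1 - 2 * α = 1 + -(2 * α) by ring, rpow_add hρ₀, rpow_one]; ring

theorem twoPoleKernel_le_far (hρ : ‖x - y‖ = 2 * ρ) (hα : 1 / 2 ≤ α) (hρ₀ : 0 < ρ)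
    (hzx : ρ ≤ ‖z - x‖) (hzy : ρ ≤ ‖z - y‖) :
    twoPoleKernel α x y z ≤ 3 * ρ ^ (1 - 2 * α) * ‖z - x‖ ^ (-2 : ℝ) := by
  have hzx₀ : 0 < ‖z - x‖ := hρ₀.trans_le hzx
  have hyz : ‖z - x‖ ≤ 3 * ‖y - z‖ := by
    have := norm_sub_le_norm_sub_add_norm_sub z y x
    rw [norm_sub_rev z y, norm_sub_rev y x, hρ] at this
    rw [norm_sub_rev z y] at hzy
    linarith
  calc twoPoleKernel α x y z ≤ 3 * ‖z - x‖⁻¹ * ‖z - x‖ ^ (-(2 * α)) := by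
        rw [twoPoleKernel]
        gcongr
        rw [inv_le_comm₀ (by linarith) (by positivity)]
        rw [mul_inv, inv_inv]
        linarith
    _ = 3 * ‖z - x‖ ^ (1 - 2 * α) * ‖z - x‖ ^ (-2 : ℝ) := by
        rw [mul_assoc, mul_assoc, ← rpow_neg_one, ← rpow_add hzx₀, ← rpow_add hzx₀]; ring_nf
    _ ≤ 3 * ρ ^ (1 - 2 * α) * ‖z - x‖ ^ (-2 : ℝ) := by
        gcongr 3 * ?_ * _
        exact rpow_le_rpow_of_nonpos hρ₀ hzx (by linarith)

theorem twoPoleKernel_le_annuli {a b R : ℝ} (hρ : ‖x - y‖ = 2 * ρ) (hρ₀ : 0 < ρ)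
    (hα : α ∈ Icc (1 / 2) 1) (ha : 0 < a) (hb : 0 < b) (hzx : a ≤ ‖z - x‖) (hzy : b ≤ ‖z - y‖)
    (hzR : ‖z - x‖ ≤ R) :
    twoPoleKernel α x y z ≤ ρ ^ (1 - 2 * α) *
      (annulusInvSq x a ρ z + annulusInvSq y b ρ z + 3 * annulusInvSq x ρ R z) := by
  have h₁ := annulusInvSq_nonneg x a ρ z
  have h₂ := annulusInvSq_nonneg y b ρ z
  have h₃ := annulusInvSq_nonneg x ρ R z
  have hc : 0 ≤ ρ ^ (1 - 2 * α) := by positivity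
  rcases lt_or_ge ‖z - x‖ ρ with hx | hx
  · have := twoPoleKernel_le_near_left hρ hα.2 (ha.trans_le hzx) hx.le
    rw [← annulusInvSq_of_le hzx hx.le] at this
    nlinarith
  rcases lt_or_ge ‖z - y‖ ρ with hy | hy
  · have hα₀ : 0 ≤ α := (by norm_num : (0 : ℝ) ≤ 1 / 2).trans hα.1
    have := twoPoleKernel_le_near_right hα₀ hx (hb.trans_le hzy) hy.le
    rw [← annulusInvSq_of_le hzy hy.le] at this
    nlinarith
  · have := twoPoleKernel_le_far hρ hα.1 hρ₀ hx hy
    rw [← annulusInvSq_of_le hx hzR] at this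
    nlinarith

theorem norm_sub_bounds_of_mem_ball_diff_union {y yt z : E} {d : ℝ} (hx : ‖x‖ ≤ 1)
    (hyyt : ‖y - yt‖ ≤ d / 2) (hz : z ∈ ball 0 1 \ (ball x (2 * d) ∪ ball yt (2 * d))) :
    2 * d ≤ ‖z - x‖ ∧ 3 * d / 2 ≤ ‖z - y‖ ∧ ‖z - x‖ ≤ 2 := by
  simp only [mem_sdiff, mem_union, mem_ball, dist_eq_norm, sub_zero, not_or, not_lt] at hz
  obtain ⟨hz, hzx, hzyt⟩ := hz
  refine ⟨hzx, ?_, ?_⟩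
  · linarith [norm_sub_le_norm_sub_add_norm_sub z y yt]
  · linarith [norm_sub_le z x]

end Kernel

theorem log_le_abs_log_of_mul_le_one {q d : ℝ} (hq : 0 < q) (hd : 0 < d) (hqd : q * d ≤ 1) :
    log q ≤ |log d| := by
  have := log_nonpos (by positivity) hqd
  rw [log_mul hq.ne' hd.ne'] at this
  linarith [neg_le_abs (log d)]

theorem setIntegral_twoPoleKernel_le {α ρ a b R : ℝ} {x y : ℂ} {S : Set ℂ}
    (hρ : ‖x - y‖ = 2 * ρ) (hα : α ∈ Icc (1 / 2) 1) (ha : 0 < a) (hb : 0 < b) (haρ : a ≤ ρ)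
    (hbρ : b ≤ ρ) (hρR : ρ ≤ R) (hS : MeasurableSet S)
    (hmem : ∀ z ∈ S, a ≤ ‖z - x‖ ∧ b ≤ ‖z - y‖ ∧ ‖z - x‖ ≤ R) :
    ∫ z in S, twoPoleKernel α x y z
      ≤ ρ ^ (1 - 2 * α) * (2 * π * (log (ρ / a) + log (ρ / b) + 3 * log (R / ρ))) := by
  have hρ₀ : 0 < ρ := ha.trans_le haρ
  have h₁ := integrable_annulusInvSq volume x (t := ρ) ha
  have h₂ := integrable_annulusInvSq volume y (t := ρ) hb
  have h₃ := integrable_annulusInvSq volume x (t := R) hρ₀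
  set g : ℂ → ℝ := fun z =>
    ρ ^ (1 - 2 * α) * (annulusInvSq x a ρ z + annulusInvSq y b ρ z + 3 * annulusInvSq x ρ R z)
  have h₁₂ : Integrable fun z => annulusInvSq x a ρ z + annulusInvSq y b ρ z := h₁.add h₂
  have hg : Integrable g := (h₁₂.add (h₃.const_mul 3)).const_mul _
  have hg₀ : 0 ≤ g := fun z => by
    have := annulusInvSq_nonneg x a ρ z
    have := annulusInvSq_nonneg y b ρ z
    have := annulusInvSq_nonneg x ρ R z
    positivity
  calc ∫ z in S, twoPoleKernel α x y z ≤ ∫ z in S, g z := by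
        refine integral_mono_of_nonneg (.of_forall fun z => twoPoleKernel_nonneg α x y z)
          hg.integrableOn (ae_restrict_of_forall_mem hS fun z hz => ?_)
        obtain ⟨hzx, hzy, hzR⟩ := hmem z hz
        exact twoPoleKernel_le_annuli hρ hρ₀ hα ha hb hzx hzy hzR
    _ ≤ ∫ z, g z := setIntegral_le_integral hg (.of_forall hg₀)
    _ = _ := by
        simp only [g]
        rw [integral_const_mul, integral_add h₁₂ (h₃.const_mul 3), integral_add h₁ h₂,
          integral_const_mul, integral_annulusInvSq x ha haρ, integral_annulusInvSq y hb hbρ,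
          integral_annulusInvSq x hρ₀ hρR]
        ring

/-- For every `α ∈ [1/2, 1)` there is `C > 0` such that for all `d ∈ (0, 1/2]`, all `x`
in the closed unit disk, and all `y, ỹ` with `ỹ` in the closed unit disk,
`|y − ỹ| ≤ d/2` and `|x − ỹ| ≥ 5d`,
`|x − y|^{2α−1} ∫_{D \ (B(x,2d) ∪ B(ỹ,2d))} |y − z|⁻¹ |z − x|^{−2α} dz ≤ C (1 + |log d|)`. -/
theorem outer_region_integral_bound (α : ℝ) (hα : α ∈ Set.Ico (1 / 2 : ℝ) 1) :
    ∃ C : ℝ, 0 < C ∧ ∀ d : ℝ, d ∈ Set.Ioc (0 : ℝ) (1 / 2) →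
      ∀ x ∈ Metric.closedBall (0 : ℂ) 1, ∀ y : ℂ, ∀ yt ∈ Metric.closedBall (0 : ℂ) 1,
      ‖y - yt‖ ≤ d / 2 → 5 * d ≤ ‖x - yt‖ →
      ‖x - y‖ ^ (2 * α - 1) *
          ∫ z in Metric.ball (0 : ℂ) 1 \ (Metric.ball x (2 * d) ∪ Metric.ball yt (2 * d)),
            ‖y - z‖⁻¹ * ‖z - x‖ ^ (-(2 * α)) ≤
        C * (1 + |Real.log d|) := by
  refine ⟨20 * π, by positivity, ?_⟩
  rintro d ⟨hd₀, hd⟩ x hx y yt hyt hyyt hxyt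
  rw [mem_closedBall_zero_iff] at hx hyt
  set r := ‖x - y‖
  have hr_lower : 9 * d / 2 ≤ r := by linarith [norm_sub_le_norm_sub_add_norm_sub x y yt]
  have hr₀ : 0 < r := by linarith
  have hr_upper : r ≤ 9 / 4 := by linarith [norm_sub_le x y, norm_le_norm_add_norm_sub' y yt]
  have hint := setIntegral_twoPoleKernel_le (α := α) (ρ := r / 2) (a := 2 * d) (b := 3 * d / 2)
    (R := 2) (by ring) ⟨hα.1, hα.2.le⟩ (by positivity) (by positivity) (by linarith)
    (by linarith) (by linarith)
    (measurableSet_ball.diff (measurableSet_ball.union measurableSet_ball))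
    fun z hz => norm_sub_bounds_of_mem_ball_diff_union hx hyyt hz
  have hscale : r ^ (2 * α - 1) * (r / 2) ^ (1 - 2 * α) ≤ 2 := by
    rw [show 1 - 2 * α = -(2 * α - 1) by ring, rpow_neg (by positivity), ← div_eq_mul_inv,
      ← div_rpow hr₀.le (by positivity), show r / (r / 2) = 2 by field_simp]
    simpa using rpow_le_rpow_of_exponent_le one_le_two (by linarith [hα.2] : 2 * α - 1 ≤ 1)
  calc r ^ (2 * α - 1) * ∫ z in ball 0 1 \ (ball x (2 * d) ∪ ball yt (2 * d)),
        twoPoleKernel α x y z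
      ≤ r ^ (2 * α - 1) * ((r / 2) ^ (1 - 2 * α) * (2 * π * (log (r / 2 / (2 * d)) +
          log (r / 2 / (3 * d / 2)) + 3 * log (2 / (r / 2))))) := by gcongr
    _ ≤ r ^ (2 * α - 1) * ((r / 2) ^ (1 - 2 * α) * (2 * π * (5 * (1 + |log d|)))) := by
        gcongr
        have h₁ := log_le_abs_log_of_mul_le_one (q := r / 2 / (2 * d)) (by positivity) hd₀
          (by rw [div_mul_eq_mul_div, div_le_one (by positivity)]; nlinarith)
        have h₂ := log_le_abs_log_of_mul_le_one (q := r / 2 / (3 * d / 2)) (by positivity) hd₀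
          (by rw [div_mul_eq_mul_div, div_le_one (by positivity)]; nlinarith)
        have h₃ := log_le_abs_log_of_mul_le_one (q := 2 / (r / 2)) (by positivity) hd₀
          (by rw [div_mul_eq_mul_div, div_le_one (by positivity)]; linarith)
        linarith
    _ ≤ 2 * (2 * π * (5 * (1 + |log d|))) := by
        rw [← mul_assoc]
        gcongr
    _ = 20 * π * (1 + |log d|) := by ring
end

section
/- For every α ∈ [1/2, 1) there exists a constant C > 0 such that the following holds: for all d ∈ (0, 1/2], all x in the closed unit disk, and all y₁, y₂ in the closed unit disk with |y₁ − y₂| = d, setting ỹ = (y₁ + y₂)/2 and assuming |x − ỹ| ≥ 5d, one has |x − y₁|^{2α} ∫_{D \ (B(x,2d) ∪ B(ỹ,2d))} |z − y₁|^{−1} |z − y₂|^{−1} |z − x|^{−2α} dz ≤ C (1 + |log d|), where D is the open unit disk and the integral is with respect to two-dimensional Lebesgue measure. -/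
/-!
Put `c = (y₁ + y₂) / 2` and `ρ = ‖x - c‖ / 2`. Outside `B(c, 2d)` both `‖z - yᵢ‖` are at least
`(3/4) ‖z - c‖`, so the integrand is at most `(16/9) ‖z - c‖⁻² ‖z - x‖^(-2α)`. Where
`‖z - x‖ ≥ ρ` this is at most `(16/9) ρ^(-2α) ‖z - c‖⁻²`, which integrates to
`(32π/9) ρ^(-2α) |log d|` over the annulus `2d ≤ ‖z - c‖ ≤ 2`. Where `‖z - x‖ < ρ` we have
`‖z - c‖ > ρ`, so it is at most `(16/9) ρ⁻² ‖z - x‖^(-2α)`, which integrates to at most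
`(32π/9) ρ^(-2α) / (2 - 2α)` over `‖z - x‖ < ρ`. Finally `‖x - y₁‖ ≤ 3ρ`, so the prefactor
`‖x - y₁‖^(2α)` cancels `ρ^(-2α)` up to a factor `9`.
-/

open MeasureTheory Metric Set Real

theorem setIntegral_annulus_eq (c : ℂ) (g : ℝ → ℝ) {a b : ℝ} (ha : 0 < a) (hab : a ≤ b) :
    ∫ z in {z : ℂ | ‖z - c‖ ∈ Icc a b}, g ‖z - c‖ = 2 * π * ∫ t in a..b, t * g t := by
  have hmeas : MeasurableSet {z : ℂ | ‖z - c‖ ∈ Icc a b} :=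
    measurableSet_Icc.preimage (by fun_prop)
  calc ∫ z in {z : ℂ | ‖z - c‖ ∈ Icc a b}, g ‖z - c‖
      = ∫ z : ℂ, (Icc a b).indicator g ‖z - c‖ := by
        rw [← integral_indicator hmeas]; rfl
    _ = ∫ z : ℂ, (Icc a b).indicator g ‖z‖ :=
        integral_sub_right_eq_self (μ := volume) (fun z : ℂ => (Icc a b).indicator g ‖z‖) c
    _ = 2 * π * ∫ t in Ioi 0, (Icc a b).indicator (fun t => t * g t) t := by
        rw [integral_fun_norm_addHaar, Complex.finrank_real_complex]
        simp only [Measure.real, Complex.volume_ball, ENNReal.ofReal_one, one_pow, one_mul,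
          ENNReal.coe_toReal, NNReal.coe_real_pi, Nat.add_one_sub_one, pow_one, indicator_apply,
          mem_Icc, smul_eq_mul, mul_ite, mul_zero, nsmul_eq_mul, Nat.cast_ofNat]
        ring
    _ = 2 * π * ∫ t in a..b, t * g t := by
        rw [setIntegral_indicator measurableSet_Icc,
          inter_eq_right.mpr (Icc_subset_Ioi_iff hab |>.mpr ha), integral_Icc_eq_integral_Ioc,
          intervalIntegral.integral_of_le hab]

theorem integrableOn_annulus (c : ℂ) {g : ℝ → ℝ} (hg : ContinuousOn g (Ioi 0)) {a b : ℝ}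
    (ha : 0 < a) : IntegrableOn (fun z => g ‖z - c‖) {z : ℂ | ‖z - c‖ ∈ Icc a b} := by
  have hcompact : IsCompact {z : ℂ | ‖z - c‖ ∈ Icc a b} :=
    (ProperSpace.isCompact_closedBall c b).of_isClosed_subset
      (isClosed_Icc.preimage (by fun_prop)) fun z hz => by simpa [dist_eq_norm] using hz.2
  refine ContinuousOn.integrableOn_compact hcompact (hg.comp (by fun_prop) fun z hz => ?_)
  exact ha.trans_le hz.1

theorem setIntegral_annulus_inv_sq (c : ℂ) {a b : ℝ} (ha : 0 < a) (hab : a ≤ b) :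
    ∫ z in {z : ℂ | ‖z - c‖ ∈ Icc a b}, (‖z - c‖ ^ 2)⁻¹ = 2 * π * log (b / a) := by
  rw [setIntegral_annulus_eq c (fun t => (t ^ 2)⁻¹) ha hab, ← integral_inv]
  · congr 1
    refine intervalIntegral.integral_congr fun t ht => ?_
    have : t ≠ 0 := by
      rw [uIcc_of_le hab] at ht; exact (ha.trans_le ht.1).ne'
    field_simp
  · rw [uIcc_of_le hab]; exact fun h => ha.not_ge h.1

theorem setIntegral_annulus_rpow (c : ℂ) {a b p : ℝ} (ha : 0 < a) (hab : a ≤ b) (hp : -2 < p) :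
    ∫ z in {z : ℂ | ‖z - c‖ ∈ Icc a b}, ‖z - c‖ ^ p
      = 2 * π * ((b ^ (p + 2) - a ^ (p + 2)) / (p + 2)) := by
  rw [setIntegral_annulus_eq c (fun t => t ^ p) ha hab]
  have : ∫ t in a..b, t * t ^ p = ∫ t in a..b, t ^ (p + 1) := by
    refine intervalIntegral.integral_congr fun t ht => ?_
    rw [uIcc_of_le hab] at ht
    show t * t ^ p = t ^ (p + 1)
    rw [rpow_add_one (ha.trans_le ht.1).ne', mul_comm]
  rw [this, integral_rpow (Or.inl (by linarith))]
  ring_nf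

section Domination

variable {X : Type*} [MeasurableSpace X] {μ : Measure X} {f g : X → ℝ} {s t : Set X}

theorem integrableOn_of_le_of_subset (hf : AEStronglyMeasurable f μ) (hs : MeasurableSet s)
    (hst : s ⊆ t) (hf0 : ∀ z ∈ s, 0 ≤ f z) (hfg : ∀ z ∈ s, f z ≤ g z) (hg : IntegrableOn g t μ) :
    IntegrableOn f s μ :=
  (hg.mono_set hst).mono' hf.restrict <| (ae_restrict_iff' hs).mpr <| ae_of_all _ fun z hz => by
    rw [Real.norm_of_nonneg (hf0 z hz)]; exact hfg z hz

theorem setIntegral_le_of_le_of_subset (hs : MeasurableSet s) (hst : s ⊆ t)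
    (hf0 : ∀ z ∈ s, 0 ≤ f z) (hfg : ∀ z ∈ s, f z ≤ g z) (hg0 : ∀ z, 0 ≤ g z)
    (hg : IntegrableOn g t μ) : ∫ z in s, f z ∂μ ≤ ∫ z in t, g z ∂μ :=
  calc ∫ z in s, f z ∂μ ≤ ∫ z in s, g z ∂μ :=
        integral_mono_of_nonneg ((ae_restrict_iff' hs).mpr (ae_of_all _ hf0)) (hg.mono_set hst)
          ((ae_restrict_iff' hs).mpr (ae_of_all _ hfg))
    _ ≤ ∫ z in t, g z ∂μ := setIntegral_mono_set hg (ae_of_all _ hg0) hst.eventuallyLE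

end Domination

theorem three_quarters_mul_norm_sub_le {E : Type*} [SeminormedAddCommGroup E] {c y z : E}
    (h : 4 * ‖y - c‖ ≤ ‖z - c‖) : 3 / 4 * ‖z - c‖ ≤ ‖z - y‖ := by
  linarith [norm_sub_le_norm_sub_add_norm_sub z y c]

theorem inv_norm_sub_mul_inv_norm_sub_le {E : Type*} [SeminormedAddCommGroup E] {c y₁ y₂ z : E}
    (h₁ : 4 * ‖y₁ - c‖ ≤ ‖z - c‖) (h₂ : 4 * ‖y₂ - c‖ ≤ ‖z - c‖) :
    ‖z - y₁‖⁻¹ * ‖z - y₂‖⁻¹ ≤ 16 / 9 * (‖z - c‖ ^ 2)⁻¹ := by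
  rcases (norm_nonneg (z - c)).eq_or_lt with hzc | hzc
  · have hzy₁ : ‖z - y₁‖ = 0 := le_antisymm (by
      linarith [norm_sub_le_norm_sub_add_norm_sub z c y₁, norm_sub_rev c y₁, norm_nonneg (y₁ - c)])
      (norm_nonneg _)
    simp [hzy₁, ← hzc]
  calc ‖z - y₁‖⁻¹ * ‖z - y₂‖⁻¹ ≤ (3 / 4 * ‖z - c‖)⁻¹ * (3 / 4 * ‖z - c‖)⁻¹ := by
        gcongr
        exacts [three_quarters_mul_norm_sub_le h₁, three_quarters_mul_norm_sub_le h₂]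
    _ = 16 / 9 * (‖z - c‖ ^ 2)⁻¹ := by field_simp; ring

noncomputable def threePointKernel (p : ℝ) (x y₁ y₂ z : ℂ) : ℝ :=
  ‖z - y₁‖⁻¹ * ‖z - y₂‖⁻¹ * ‖z - x‖ ^ (-p)

section ThreePointKernel

variable {p ρ : ℝ} {c x y₁ y₂ z : ℂ}

theorem threePointKernel_nonneg : 0 ≤ threePointKernel p x y₁ y₂ z := by
  unfold threePointKernel; positivity

theorem measurable_threePointKernel : Measurable (threePointKernel p x y₁ y₂) := by
  unfold threePointKernel; fun_prop

theorem threePointKernel_le_of_le_norm_sub (hp : 0 ≤ p) (hρ : 0 < ρ)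
    (h₁ : 4 * ‖y₁ - c‖ ≤ ‖z - c‖) (h₂ : 4 * ‖y₂ - c‖ ≤ ‖z - c‖) (hzx : ρ ≤ ‖z - x‖) :
    threePointKernel p x y₁ y₂ z ≤ 16 / 9 * ρ ^ (-p) * (‖z - c‖ ^ 2)⁻¹ := by
  calc threePointKernel p x y₁ y₂ z
      ≤ 16 / 9 * (‖z - c‖ ^ 2)⁻¹ * ρ ^ (-p) :=
        mul_le_mul (inv_norm_sub_mul_inv_norm_sub_le h₁ h₂)
          (rpow_le_rpow_of_nonpos hρ hzx (neg_nonpos.mpr hp)) (by positivity) (by positivity)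
    _ = 16 / 9 * ρ ^ (-p) * (‖z - c‖ ^ 2)⁻¹ := by ring

theorem threePointKernel_le_of_norm_sub_lt (h₁ : 8 * ‖y₁ - c‖ ≤ ‖x - c‖)
    (h₂ : 8 * ‖y₂ - c‖ ≤ ‖x - c‖) (hzx : ‖z - x‖ < ‖x - c‖ / 2) :
    threePointKernel p x y₁ y₂ z
      ≤ 16 / 9 * ((‖x - c‖ / 2) ^ 2)⁻¹ * ‖z - x‖ ^ (-p) := by
  have hzc : ‖x - c‖ / 2 ≤ ‖z - c‖ := by
    linarith [norm_sub_le_norm_sub_add_norm_sub x z c, norm_sub_rev x z]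
  have hρ : 0 < ‖x - c‖ / 2 := (norm_nonneg _).trans_lt hzx
  refine mul_le_mul_of_nonneg_right ?_ (by positivity)
  calc ‖z - y₁‖⁻¹ * ‖z - y₂‖⁻¹ ≤ 16 / 9 * (‖z - c‖ ^ 2)⁻¹ :=
        inv_norm_sub_mul_inv_norm_sub_le (by linarith) (by linarith)
    _ ≤ 16 / 9 * ((‖x - c‖ / 2) ^ 2)⁻¹ := by gcongr

theorem setIntegral_threePointKernel_far_le {s : Set ℂ} {a R : ℝ} (hp : 0 ≤ p) (ha : 0 < a)
    (haR : a ≤ R) (hρ : 0 < ρ) (h₁ : 4 * ‖y₁ - c‖ ≤ a) (h₂ : 4 * ‖y₂ - c‖ ≤ a)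
    (hs : MeasurableSet s) (hsub : s ⊆ {z | ‖z - c‖ ∈ Icc a R ∧ ρ ≤ ‖z - x‖}) :
    IntegrableOn (threePointKernel p x y₁ y₂) s ∧
      ∫ z in s, threePointKernel p x y₁ y₂ z ≤ 32 * π / 9 * ρ ^ (-p) * log (R / a) := by
  set G : ℂ → ℝ := fun z => 16 / 9 * ρ ^ (-p) * (‖z - c‖ ^ 2)⁻¹
  have hsub' : s ⊆ {z | ‖z - c‖ ∈ Icc a R} := fun z hz => (hsub hz).1
  have hKG : ∀ z ∈ s, threePointKernel p x y₁ y₂ z ≤ G z := fun z hz =>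
    threePointKernel_le_of_le_norm_sub hp hρ (h₁.trans (hsub hz).1.1) (h₂.trans (hsub hz).1.1)
      (hsub hz).2
  have hG : IntegrableOn G {z | ‖z - c‖ ∈ Icc a R} :=
    (integrableOn_annulus c (g := fun t => (t ^ 2)⁻¹)
      ((continuousOn_pow 2).inv₀ fun t ht => pow_ne_zero 2 (ne_of_gt ht)) ha).const_mul _
  refine ⟨integrableOn_of_le_of_subset measurable_threePointKernel.aestronglyMeasurable hs hsub'
    (fun _ _ => threePointKernel_nonneg) hKG hG, ?_⟩
  calc ∫ z in s, threePointKernel p x y₁ y₂ z ≤ ∫ z in {z | ‖z - c‖ ∈ Icc a R}, G z :=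
        setIntegral_le_of_le_of_subset hs hsub' (fun _ _ => threePointKernel_nonneg) hKG
          (fun z => by positivity) hG
    _ = 32 * π / 9 * ρ ^ (-p) * log (R / a) := by
        rw [integral_const_mul, setIntegral_annulus_inv_sq c ha haR]; ring

theorem setIntegral_threePointKernel_near_le {s : Set ℂ} {a : ℝ} (hp : p < 2) (ha : 0 < a)
    (h₁ : 8 * ‖y₁ - c‖ ≤ ‖x - c‖) (h₂ : 8 * ‖y₂ - c‖ ≤ ‖x - c‖) (hxc : 2 * a ≤ ‖x - c‖)
    (hs : MeasurableSet s) (hsub : s ⊆ {z | ‖z - x‖ ∈ Ico a (‖x - c‖ / 2)}) :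
    IntegrableOn (threePointKernel p x y₁ y₂) s ∧
      ∫ z in s, threePointKernel p x y₁ y₂ z
        ≤ 32 * π / 9 * (‖x - c‖ / 2) ^ (-p) * (1 / (2 - p)) := by
  have haρ : a ≤ ‖x - c‖ / 2 := by linarith
  set ρ := ‖x - c‖ / 2
  have hρ : 0 < ρ := ha.trans_le haρ
  set G : ℂ → ℝ := fun z => 16 / 9 * (ρ ^ 2)⁻¹ * ‖z - x‖ ^ (-p)
  have hsub' : s ⊆ {z | ‖z - x‖ ∈ Icc a ρ} := fun z hz => Ico_subset_Icc_self (hsub hz)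
  have hKG : ∀ z ∈ s, threePointKernel p x y₁ y₂ z ≤ G z := fun z hz =>
    threePointKernel_le_of_norm_sub_lt h₁ h₂ (hsub hz).2
  have hG : IntegrableOn G {z | ‖z - x‖ ∈ Icc a ρ} :=
    (integrableOn_annulus x (g := fun t => t ^ (-p))
      (continuousOn_id.rpow_const fun t ht => Or.inl (ne_of_gt ht)) ha).const_mul _
  refine ⟨integrableOn_of_le_of_subset measurable_threePointKernel.aestronglyMeasurable hs hsub'
    (fun _ _ => threePointKernel_nonneg) hKG hG, ?_⟩
  have h2p : 0 < 2 - p := by linarith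
  calc ∫ z in s, threePointKernel p x y₁ y₂ z ≤ ∫ z in {z | ‖z - x‖ ∈ Icc a ρ}, G z :=
        setIntegral_le_of_le_of_subset hs hsub' (fun _ _ => threePointKernel_nonneg) hKG
          (fun z => by positivity) hG
    _ = 16 / 9 * (ρ ^ 2)⁻¹ * (2 * π * ((ρ ^ (2 - p) - a ^ (2 - p)) / (2 - p))) := by
        rw [integral_const_mul, setIntegral_annulus_rpow x ha haρ (by linarith), neg_add_eq_sub]
    _ ≤ 16 / 9 * (ρ ^ 2)⁻¹ * (2 * π * (ρ ^ (2 - p) / (2 - p))) := by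
        gcongr; exact sub_le_self _ (by positivity)
    _ = 32 * π / 9 * ρ ^ (-p) * (1 / (2 - p)) := by
        rw [sub_eq_add_neg, rpow_add hρ, rpow_two]; field_simp; ring

theorem setIntegral_threePointKernel_le {s : Set ℂ} {a R : ℝ} (hp₀ : 0 ≤ p) (hp₂ : p < 2)
    (ha : 0 < a) (haR : a ≤ R) (h₁ : 4 * ‖y₁ - c‖ ≤ a) (h₂ : 4 * ‖y₂ - c‖ ≤ a)
    (hxc : 2 * a ≤ ‖x - c‖) (hs : MeasurableSet s)
    (hsub : s ⊆ {z | ‖z - c‖ ∈ Icc a R ∧ a ≤ ‖z - x‖}) :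
    ∫ z in s, threePointKernel p x y₁ y₂ z
      ≤ 32 * π / 9 * (‖x - c‖ / 2) ^ (-p) * (log (R / a) + 1 / (2 - p)) := by
  set A := {z : ℂ | ‖x - c‖ / 2 ≤ ‖z - x‖}
  have hA : MeasurableSet A := measurableSet_le measurable_const (by fun_prop)
  obtain ⟨hfar_int, hfar⟩ := setIntegral_threePointKernel_far_le hp₀ ha haR
    (by linarith : 0 < ‖x - c‖ / 2) h₁ h₂ (hs.inter hA) fun z hz => ⟨(hsub hz.1).1, hz.2⟩
  obtain ⟨hnear_int, hnear⟩ := setIntegral_threePointKernel_near_le (y₁ := y₁)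
    (y₂ := y₂) hp₂ ha (by linarith) (by linarith) hxc (hs.diff hA)
    fun z hz => ⟨(hsub hz.1).2, not_le.mp hz.2⟩
  have hint : IntegrableOn (threePointKernel p x y₁ y₂) s := by
    rw [← inter_union_sdiff s A]; exact hfar_int.union hnear_int
  rw [← integral_inter_add_sdiff hA hint]
  linarith

end ThreePointKernel

theorem norm_sub_add_div_two_left {𝕜 : Type*} [RCLike 𝕜] (y₁ y₂ : 𝕜) :
    ‖y₁ - (y₁ + y₂) / 2‖ = ‖y₁ - y₂‖ / 2 := by
  rw [show y₁ - (y₁ + y₂) / 2 = (y₁ - y₂) / 2 by ring, norm_div, RCLike.norm_two]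

theorem norm_sub_add_div_two_right {𝕜 : Type*} [RCLike 𝕜] (y₁ y₂ : 𝕜) :
    ‖y₂ - (y₁ + y₂) / 2‖ = ‖y₁ - y₂‖ / 2 := by
  rw [add_comm, norm_sub_rev y₁, norm_sub_add_div_two_left]

theorem ball_zero_one_diff_union_ball_subset {E : Type*} [SeminormedAddCommGroup E] {x c : E}
    {r : ℝ} (hc : ‖c‖ ≤ 1) :
    ball (0 : E) 1 \ (ball x r ∪ ball c r) ⊆ {z | ‖z - c‖ ∈ Icc r 2 ∧ r ≤ ‖z - x‖} := by
  rintro z ⟨hz, hzx⟩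
  simp only [mem_union, mem_ball, dist_eq_norm, not_or, not_lt, sub_zero] at hz hzx
  exact ⟨⟨hzx.2, by linarith [norm_sub_le z c]⟩, hzx.1⟩

theorem setIntegral_threePointKernel_outer_region_le {p d : ℝ} {x y₁ y₂ : ℂ} (hp₀ : 0 ≤ p)
    (hp₂ : p < 2) (hd : 0 < d) (hd₁ : d ≤ 1) (hy₁ : ‖y₁‖ ≤ 1) (hy₂ : ‖y₂‖ ≤ 1)
    (hy : ‖y₁ - y₂‖ = d) (hxc : 4 * d ≤ ‖x - (y₁ + y₂) / 2‖) :
    ∫ z in ball (0 : ℂ) 1 \ (ball x (2 * d) ∪ ball ((y₁ + y₂) / 2) (2 * d)),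
        threePointKernel p x y₁ y₂ z
      ≤ 32 * π / 9 * (‖x - (y₁ + y₂) / 2‖ / 2) ^ (-p) * (|log d| + 1 / (2 - p)) := by
  have hyc₁ := norm_sub_add_div_two_left y₁ y₂
  have hyc₂ := norm_sub_add_div_two_right y₁ y₂
  have hc : ‖(y₁ + y₂) / 2‖ ≤ 1 := by
    rw [norm_div, RCLike.norm_two]; linarith [norm_add_le y₁ y₂]
  have hlog : log (2 / (2 * d)) = |log d| := by
    rw [abs_of_nonpos (log_nonpos hd.le hd₁), ← log_inv]; congr 1; field_simp
  rw [← hlog]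
  exact setIntegral_threePointKernel_le hp₀ hp₂ (by linarith) (by linarith) (by linarith)
    (by linarith) (by linarith)
    (measurableSet_ball.diff (measurableSet_ball.union measurableSet_ball))
    (ball_zero_one_diff_union_ball_subset hc)

theorem rpow_mul_rpow_neg_le {u ρ k p q : ℝ} (hu : 0 ≤ u) (hρ : 0 < ρ) (huk : u ≤ k * ρ)
    (hk : 1 ≤ k) (hp : 0 ≤ p) (hpq : p ≤ q) : u ^ p * ρ ^ (-p) ≤ k ^ q := by
  rw [rpow_neg hρ.le, ← div_eq_mul_inv, ← div_rpow hu hρ.le]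
  calc (u / ρ) ^ p ≤ k ^ p := rpow_le_rpow (by positivity) ((div_le_iff₀ hρ).mpr huk) hp
    _ ≤ k ^ q := rpow_le_rpow_of_exponent_le hk hpq

/-- For every `α ∈ [1/2, 1)` there is `C > 0` such that for all `d ∈ (0, 1/2]`, all `x`
in the closed unit disk, all `y₁, y₂` in the closed unit disk with `|y₁ − y₂| = d`,
setting `ỹ = (y₁+y₂)/2` and assuming `|x − ỹ| ≥ 5d`,
`|x − y₁|^{2α} ∫_{D \ (B(x,2d) ∪ B(ỹ,2d))} |z − y₁|⁻¹ |z − y₂|⁻¹ |z − x|^{−2α} dz ≤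
  C (1 + |log d|)`. -/
theorem outer_region_double_integral_bound (α : ℝ) (hα : α ∈ Set.Ico (1 / 2 : ℝ) 1) :
    ∃ C : ℝ, 0 < C ∧ ∀ d : ℝ, d ∈ Set.Ioc (0 : ℝ) (1 / 2) →
      ∀ x ∈ Metric.closedBall (0 : ℂ) 1,
      ∀ y₁ ∈ Metric.closedBall (0 : ℂ) 1, ∀ y₂ ∈ Metric.closedBall (0 : ℂ) 1,
      ‖y₁ - y₂‖ = d → 5 * d ≤ ‖x - (y₁ + y₂) / 2‖ →
      ‖x - y₁‖ ^ (2 * α) *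
          ∫ z in Metric.ball (0 : ℂ) 1 \
              (Metric.ball x (2 * d) ∪ Metric.ball ((y₁ + y₂) / 2) (2 * d)),
            ‖z - y₁‖⁻¹ * ‖z - y₂‖⁻¹ * ‖z - x‖ ^ (-(2 * α)) ≤
        C * (1 + |Real.log d|) := by
  obtain ⟨hα₀, hα₁⟩ := hα
  have hα' : 0 < 1 - α := by linarith
  refine ⟨32 * π / (1 - α), by positivity, ?_⟩
  rintro d ⟨hd, hd₂⟩ x - y₁ hy₁ y₂ hy₂ hy hxc
  rw [mem_closedBall_zero_iff] at hy₁ hy₂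
  have hint := setIntegral_threePointKernel_outer_region_le (p := 2 * α) (by linarith)
    (by linarith) hd (by linarith) hy₁ hy₂ hy ((by linarith : 4 * d ≤ 5 * d).trans hxc)
  have hxy : ‖x - y₁‖ ≤ 3 * (‖x - (y₁ + y₂) / 2‖ / 2) := by
    linarith [norm_sub_le_norm_sub_add_norm_sub x ((y₁ + y₂) / 2) y₁,
      norm_sub_rev ((y₁ + y₂) / 2) y₁, norm_sub_add_div_two_left y₁ y₂]
  have hρ : 0 < ‖x - (y₁ + y₂) / 2‖ / 2 := by linarith
  set ρ := ‖x - (y₁ + y₂) / 2‖ / 2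
  have hx₁ : ‖x - y₁‖ ^ (2 * α) * ρ ^ (-(2 * α)) ≤ 3 ^ (2 : ℝ) :=
    rpow_mul_rpow_neg_le (norm_nonneg _) hρ hxy (by norm_num) (by linarith) (by linarith)
  have hconst : |log d| + 1 / (2 - 2 * α) ≤ (1 + |log d|) / (1 - α) := by
    rw [le_div_iff₀ hα', add_mul, show 1 / (2 - 2 * α) * (1 - α) = 1 / 2 by field_simp]
    nlinarith [abs_nonneg (log d)]
  have h2α : 0 < 2 - 2 * α := by linarith
  calc _ ≤ ‖x - y₁‖ ^ (2 * α) * (32 * π / 9 * ρ ^ (-(2 * α)) * (|log d| + 1 / (2 - 2 * α))) := by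
        gcongr; exact hint
    _ = 32 * π / 9 * (‖x - y₁‖ ^ (2 * α) * ρ ^ (-(2 * α))) * (|log d| + 1 / (2 - 2 * α)) := by
        ring
    _ ≤ 32 * π / 9 * 3 ^ (2 : ℝ) * ((1 + |log d|) / (1 - α)) := by gcongr
    _ = 32 * π / (1 - α) * (1 + |log d|) := by norm_num; ring
end
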